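/- arXiv:2104.04012 — 9 statements merged into one kernel-verified Lean document; each statement's English description precedes it below -/
import Mathlib

section
/- Let X be a real Banach space, L : X → X a compact linear operator, and R : ℝ × X → X continuous and compact (it maps bounded sets to relatively compact sets) with ‖R(λ,x)‖/‖x‖ → 0 as 0 ≠ ‖x‖ → 0 uniformly for λ in bounded sets. If λ₀ ≠ 0 is a bifurcation point of the equation λx = Lx + R(λ,x), then λ₀ is an eigenvalue of L, i.e. ker(λ₀I − L) ≠ {0}. -/
/-!
Normalize the bifurcating solutions: `yₙ = xₙ / ‖xₙ‖` lie on the unit sphere and satisfy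
`λₙ yₙ - L yₙ = R(λₙ, xₙ) / ‖xₙ‖ → 0` by the uniform higher-order smallness of `R`. Compactness
of `L` gives a subsequence along which `L yₙ` converges, and since `λ₀ ≠ 0` the `yₙ` themselves
converge there, to a unit vector `y` with `L y = λ₀ y`.
-/

open Filter Topology

section

variable {𝕜 X : Type*} [NontriviallyNormedField 𝕜] [NormedAddCommGroup X] [NormedSpace 𝕜 X]

theorem IsCompactOperator.exists_eigenvector_of_tendsto_smul_sub {L : X →L[𝕜] X}
    (hL : IsCompactOperator L) {lam₀ : 𝕜} (hlam₀ : lam₀ ≠ 0) {lams : ℕ → 𝕜} {ys : ℕ → X}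
    (hys : ∀ n, ‖ys n‖ = 1) (hlams : Tendsto lams atTop (𝓝 lam₀))
    (happrox : Tendsto (fun n => lams n • ys n - L (ys n)) atTop (𝓝 0)) :
    ∃ y : X, y ≠ 0 ∧ L y = lam₀ • y := by
  have hK : IsCompact (closure (L '' Metric.closedBall 0 1)) :=
    IsCompactOperator.isCompact_closure_image_of_isVonNBounded (f := (L : X →ₗ[𝕜] X)) hL
      (NormedSpace.isVonNBounded_closedBall 𝕜 X 1)
  have hmem (n : ℕ) : L (ys n) ∈ closure (L '' Metric.closedBall 0 1) :=
    subset_closure ⟨ys n, by simp [hys n], rfl⟩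
  obtain ⟨z, -, φ, hφ, hLz⟩ := hK.tendsto_subseq hmem
  have hsmul : Tendsto (fun k => lams (φ k) • ys (φ k)) atTop (𝓝 z) := by
    simpa using hLz.add (happrox.comp hφ.tendsto_atTop)
  have hlamsφ := hlams.comp hφ.tendsto_atTop
  have hy : Tendsto (fun k => ys (φ k)) atTop (𝓝 (lam₀⁻¹ • z)) := by
    refine ((hlamsφ.inv₀ hlam₀).smul hsmul).congr' ?_
    filter_upwards [hlamsφ.eventually_ne hlam₀] with k hk
    exact inv_smul_smul₀ hk _
  have hnorm : ‖lam₀⁻¹ • z‖ = 1 :=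
    tendsto_nhds_unique (hy.norm.congr fun k => hys (φ k)) tendsto_const_nhds
  refine ⟨lam₀⁻¹ • z, norm_ne_zero_iff.mp (by simp [hnorm]), ?_⟩
  rw [tendsto_nhds_unique ((L.continuous.tendsto _).comp hy) hLz, smul_inv_smul₀ hlam₀]

end

theorem tendsto_inv_norm_smul_of_uniformly_small {X : Type*} [NormedAddCommGroup X]
    [NormedSpace ℝ X] {ι : Type*} {l : Filter ι} (R : ℝ × X → X)
    (hsmall : ∀ C > (0 : ℝ), ∀ ε > (0 : ℝ), ∃ δ > (0 : ℝ), ∀ lam : ℝ, |lam| ≤ C →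
      ∀ x : X, x ≠ 0 → ‖x‖ < δ → ‖R (lam, x)‖ ≤ ε * ‖x‖)
    {lams : ι → ℝ} {xs : ι → X} {lam₀ : ℝ} (hlams : Tendsto lams l (𝓝 lam₀))
    (hxs : Tendsto (fun i => ‖xs i‖) l (𝓝 0)) (hne : ∀ i, xs i ≠ 0) :
    Tendsto (fun i => ‖xs i‖⁻¹ • R (lams i, xs i)) l (𝓝 0) := by
  refine Metric.tendsto_nhds.mpr fun ε hε => ?_
  obtain ⟨δ, hδ, hR⟩ := hsmall (|lam₀| + 1) (by positivity) (ε / 2) (by positivity)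
  filter_upwards [hlams.abs.eventually (gt_mem_nhds (lt_add_one |lam₀|)),
    hxs.eventually (gt_mem_nhds hδ)] with i hlam hx
  have hpos : 0 < ‖xs i‖ := norm_pos_iff.mpr (hne i)
  calc dist (‖xs i‖⁻¹ • R (lams i, xs i)) 0 = ‖xs i‖⁻¹ * ‖R (lams i, xs i)‖ := by
        simp [norm_smul]
    _ ≤ ‖xs i‖⁻¹ * (ε / 2 * ‖xs i‖) := by gcongr; exact hR _ hlam.le _ (hne i) hx
    _ = ε / 2 := by field_simp
    _ < ε := half_lt_self hε

theorem stmt1_general {X : Type*} [NormedAddCommGroup X] [NormedSpace ℝ X]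
    (L : X →L[ℝ] X) (hLc : IsCompactOperator (⇑L))
    (R : ℝ × X → X)
    (hsmall : ∀ C > (0 : ℝ), ∀ ε > (0 : ℝ), ∃ δ > (0 : ℝ), ∀ lam : ℝ, |lam| ≤ C →
      ∀ x : X, x ≠ 0 → ‖x‖ < δ → ‖R (lam, x)‖ ≤ ε * ‖x‖)
    (lam₀ : ℝ) (hlam₀ : lam₀ ≠ 0)
    (hbif : ∃ (lams : ℕ → ℝ) (xs : ℕ → X),
      (∀ n, xs n ≠ 0 ∧ lams n • xs n = L (xs n) + R (lams n, xs n)) ∧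
      Tendsto lams atTop (nhds lam₀) ∧
      Tendsto (fun n => ‖xs n‖) atTop (nhds 0)) :
    ∃ x : X, x ≠ 0 ∧ L x = lam₀ • x := by
  obtain ⟨lams, xs, hsol, hlams, hxs⟩ := hbif
  have hne (n : ℕ) : xs n ≠ 0 := (hsol n).1
  have happrox (n : ℕ) : lams n • (‖xs n‖⁻¹ • xs n) - L (‖xs n‖⁻¹ • xs n) =
      ‖xs n‖⁻¹ • R (lams n, xs n) := by
    rw [smul_comm, map_smul, ← smul_sub, (hsol n).2, add_sub_cancel_left]
  have hunit (n : ℕ) : ‖‖xs n‖⁻¹ • xs n‖ = 1 := by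
    rw [norm_smul, norm_inv, norm_norm, inv_mul_cancel₀ (norm_ne_zero_iff.mpr (hne n))]
  refine hLc.exists_eigenvector_of_tendsto_smul_sub hlam₀ hunit hlams ?_
  simpa only [happrox] using tendsto_inv_norm_smul_of_uniformly_small R hsmall hlams hxs hne

/-- In a real Banach space, with L compact linear and R continuous, compact
and of higher order at the origin uniformly for λ bounded, any non-zero bifurcation point
λ₀ of λx = Lx + R(λ,x) is an eigenvalue of L. -/
theorem stmt1 {X : Type*} [NormedAddCommGroup X] [NormedSpace ℝ X] [CompleteSpace X]
    (L : X →L[ℝ] X) (hLc : IsCompactOperator (⇑L))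
    (R : ℝ × X → X) (hRcont : Continuous R)
    (hRcomp : ∀ s : Set (ℝ × X), Bornology.IsBounded s → IsCompact (closure (R '' s)))
    (hsmall : ∀ C > (0 : ℝ), ∀ ε > (0 : ℝ), ∃ δ > (0 : ℝ), ∀ lam : ℝ, |lam| ≤ C →
      ∀ x : X, x ≠ 0 → ‖x‖ < δ → ‖R (lam, x)‖ ≤ ε * ‖x‖)
    (lam₀ : ℝ) (hlam₀ : lam₀ ≠ 0)
    (hbif : ∃ (lams : ℕ → ℝ) (xs : ℕ → X),
      (∀ n, xs n ≠ 0 ∧ lams n • xs n = L (xs n) + R (lams n, xs n)) ∧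
      Tendsto lams atTop (nhds lam₀) ∧
      Tendsto (fun n => ‖xs n‖) atTop (nhds 0)) :
    ∃ x : X, x ≠ 0 ∧ L x = lam₀ • x :=
  stmt1_general L hLc R hsmall lam₀ hlam₀ hbif
end

section
/- Let X be a finite-dimensional real normed space, L : X → X linear, and R : ℝ × X → X continuous with ‖R(λ,x)‖/‖x‖ → 0 as 0 ≠ ‖x‖ → 0 uniformly for λ in bounded sets. If λ₀ = 0 is a bifurcation point of the equation λx = Lx + R(λ,x), then 0 is an eigenvalue of L, i.e. L is not injective. -/
/-!
Normalising the non-trivial solutions, `uₙ = xₙ / ‖xₙ‖` lies on the unit sphere and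
`L uₙ = λₙ uₙ - R(λₙ, xₙ) / ‖xₙ‖`, which tends to `0` because `λₙ → 0` and `R` is of higher order
at the origin. By compactness of the unit sphere a subsequence of `uₙ` converges to a unit
vector `y`, and continuity of `L` gives `L y = 0`.
-/

open Filter Topology

theorem tendsto_inv_norm_mul_norm_remainder {ι X Y : Type*} [NormedAddCommGroup X]
    [NormedAddCommGroup Y] {R : ℝ × X → Y}
    (hR : ∀ C > (0 : ℝ), ∀ ε > (0 : ℝ), ∃ δ > (0 : ℝ), ∀ lam : ℝ, |lam| ≤ C →
      ∀ x : X, x ≠ 0 → ‖x‖ < δ → ‖R (lam, x)‖ ≤ ε * ‖x‖)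
    {l : Filter ι} {lams : ι → ℝ} {xs : ι → X} {C : ℝ} (hC : 0 < C)
    (hlams : ∀ᶠ i in l, |lams i| ≤ C) (hxs : Tendsto (fun i => ‖xs i‖) l (𝓝 0)) :
    Tendsto (fun i => ‖xs i‖⁻¹ * ‖R (lams i, xs i)‖) l (𝓝 0) := by
  rw [Metric.tendsto_nhds]
  intro ε hε
  obtain ⟨δ, hδ, hRδ⟩ := hR C hC (ε / 2) (half_pos hε)
  filter_upwards [hlams, hxs.eventually (gt_mem_nhds hδ)] with i hlam hx
  rw [Real.dist_0_eq_abs, abs_of_nonneg (by positivity)]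
  rcases eq_or_ne (xs i) 0 with h0 | h0
  · simpa [h0] using hε
  · calc ‖xs i‖⁻¹ * ‖R (lams i, xs i)‖ ≤ ‖xs i‖⁻¹ * (ε / 2 * ‖xs i‖) := by
          gcongr; exact hRδ _ hlam _ h0 hx
      _ = ε / 2 := by field_simp [norm_ne_zero_iff.mpr h0]
      _ < ε := half_lt_self hε

theorem norm_map_inv_norm_smul_le {X : Type*} [NormedAddCommGroup X] [NormedSpace ℝ X]
    (L : X →ₗ[ℝ] X) {lam : ℝ} {x r : X} (h : lam • x = L x + r) :
    ‖L (‖x‖⁻¹ • x)‖ ≤ |lam| + ‖x‖⁻¹ * ‖r‖ := by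
  have hLx : L x = lam • x - r := eq_sub_of_add_eq h.symm
  calc ‖L (‖x‖⁻¹ • x)‖ = ‖x‖⁻¹ * ‖lam • x - r‖ := by
        rw [map_smul, hLx, norm_smul, Real.norm_eq_abs, abs_inv, abs_norm]
    _ ≤ ‖x‖⁻¹ * (|lam| * ‖x‖ + ‖r‖) := by
        gcongr
        exact (norm_sub_le _ _).trans_eq (by rw [norm_smul, Real.norm_eq_abs])
    _ = |lam| * (‖x‖⁻¹ * ‖x‖) + ‖x‖⁻¹ * ‖r‖ := by ring
    _ ≤ |lam| + ‖x‖⁻¹ * ‖r‖ := by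
        gcongr
        exact mul_le_of_le_one_right (abs_nonneg lam) inv_mul_le_one

theorem LinearMap.exists_ne_zero_map_eq_zero_of_tendsto {X Y : Type*} [NormedAddCommGroup X]
    [NormedSpace ℝ X] [FiniteDimensional ℝ X] [NormedAddCommGroup Y] [NormedSpace ℝ Y]
    (L : X →ₗ[ℝ] Y) {u : ℕ → X} (hu : ∀ n, ‖u n‖ = 1)
    (hLu : Tendsto (fun n => L (u n)) atTop (𝓝 0)) : ∃ y, y ≠ 0 ∧ L y = 0 := by
  obtain ⟨y, hy, φ, hφ, hφy⟩ :=
    (isCompact_sphere (0 : X) 1).tendsto_subseq (x := u) fun n => mem_sphere_zero_iff_norm.2 (hu n)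
  refine ⟨y, ne_zero_of_mem_unit_sphere ⟨y, hy⟩, ?_⟩
  exact tendsto_nhds_unique ((L.continuous_of_finiteDimensional.tendsto y).comp hφy)
    (hLu.comp hφ.tendsto_atTop)

theorem stmt2_general {X : Type*} [NormedAddCommGroup X] [NormedSpace ℝ X] [FiniteDimensional ℝ X]
    (L : X →ₗ[ℝ] X)
    (R : ℝ × X → X)
    (hsmall : ∀ C > (0 : ℝ), ∀ ε > (0 : ℝ), ∃ δ > (0 : ℝ), ∀ lam : ℝ, |lam| ≤ C →
      ∀ x : X, x ≠ 0 → ‖x‖ < δ → ‖R (lam, x)‖ ≤ ε * ‖x‖)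
    (hbif : ∃ (lams : ℕ → ℝ) (xs : ℕ → X),
      (∀ n, xs n ≠ 0 ∧ lams n • xs n = L (xs n) + R (lams n, xs n)) ∧
      Tendsto lams atTop (nhds 0) ∧
      Tendsto (fun n => ‖xs n‖) atTop (nhds 0)) :
    (∃ x : X, x ≠ 0 ∧ L x = 0) ∧ ¬ Function.Injective L := by
  obtain ⟨lams, xs, hsol, hlams, hxs⟩ := hbif
  have hlams_abs : Tendsto (fun n => |lams n|) atTop (𝓝 0) := by simpa using hlams.abs
  have hrem := tendsto_inv_norm_mul_norm_remainder hsmall one_pos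
    (hlams_abs.eventually (eventually_le_nhds one_pos)) hxs
  have hLu : Tendsto (fun n => L (‖xs n‖⁻¹ • xs n)) atTop (𝓝 0) :=
    squeeze_zero_norm (fun n => norm_map_inv_norm_smul_le L (hsol n).2)
      (by simpa using hlams_abs.add hrem)
  obtain ⟨y, hy, hLy⟩ :=
    L.exists_ne_zero_map_eq_zero_of_tendsto (fun n => norm_smul_inv_norm (hsol n).1) hLu
  exact ⟨⟨y, hy, hLy⟩, fun hinj => hy (hinj (hLy.trans L.map_zero.symm))⟩

/-- In a finite-dimensional real normed space, with L linear and R continuous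
and of higher order at the origin uniformly for λ bounded, if λ₀ = 0 is a bifurcation point
of λx = Lx + R(λ,x) then 0 is an eigenvalue of L, i.e. L is not injective. -/
theorem stmt2 {X : Type*} [NormedAddCommGroup X] [NormedSpace ℝ X] [FiniteDimensional ℝ X]
    (L : X →ₗ[ℝ] X)
    (R : ℝ × X → X) (hRcont : Continuous R)
    (hsmall : ∀ C > (0 : ℝ), ∀ ε > (0 : ℝ), ∃ δ > (0 : ℝ), ∀ lam : ℝ, |lam| ≤ C →
      ∀ x : X, x ≠ 0 → ‖x‖ < δ → ‖R (lam, x)‖ ≤ ε * ‖x‖)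
    (hbif : ∃ (lams : ℕ → ℝ) (xs : ℕ → X),
      (∀ n, xs n ≠ 0 ∧ lams n • xs n = L (xs n) + R (lams n, xs n)) ∧
      Tendsto lams atTop (nhds 0) ∧
      Tendsto (fun n => ‖xs n‖) atTop (nhds 0)) :
    (∃ x : X, x ≠ 0 ∧ L x = 0) ∧ ¬ Function.Injective L :=
  stmt2_general L R hsmall hbif
end

section
/- Let M be a metric space and γ : [0,1] → M a continuous, non-constant map, and let K = γ([0,1]). Then K is a decomposable continuum: K is compact and connected, and there exist compact connected sets K₁ and K₂, each a proper subset of K, with K = K₁ ∪ K₂. -/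
/-!
Extend `γ` constantly to `ℝ` and choose `h > 0` so small (uniform continuity) that no image
`γ([a, a + h])` contains two given points of `K` at positive distance. If `[0, (k + 1) h]` is
the first initial segment whose image is all of `K`, then
`K = γ([0, k h]) ∪ γ([k h, (k + 1) h])`, where the first piece is proper by minimality of `k`
and the second because it is too small.
-/

open Set

theorem exists_image_Icc_ne_and_union_eq {α : Type*} {f : ℝ → α} {S : Set α} {h : ℝ}
    (hh : 0 ≤ h) (hS : ∃ N : ℕ, f '' Icc 0 (N * h) = S) (h0 : {f 0} ≠ S) :
    ∃ x ≥ 0, f '' Icc 0 x ≠ S ∧ f '' Icc 0 x ∪ f '' Icc x (x + h) = S := by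
  classical
  obtain ⟨k, hk⟩ : ∃ k, Nat.find hS = k + 1 :=
    Nat.exists_eq_succ_of_ne_zero fun hN => h0 (by simpa [hN] using Nat.find_spec hS)
  have hx : 0 ≤ k * h := by positivity
  refine ⟨k * h, hx, Nat.find_min hS (by omega), ?_⟩
  rw [← image_union, Icc_union_Icc_eq_Icc hx (by linarith)]
  simpa [hk, add_mul] using Nat.find_spec hS

theorem UniformContinuous.exists_pos_forall_pair_not_subset_image_Icc {M : Type*}
    [PseudoMetricSpace M] {f : ℝ → M} (hf : UniformContinuous f) {p q : M} (hpq : 0 < dist p q) :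
    ∃ h > 0, ∀ x, ¬ {p, q} ⊆ f '' Icc x (x + h) := by
  obtain ⟨δ, hδ, hfδ⟩ := Metric.uniformContinuous_iff.mp hf _ hpq
  refine ⟨δ / 2, by positivity, fun x hpq' => ?_⟩
  obtain ⟨a, ha, rfl⟩ := hpq' (mem_insert p {q})
  obtain ⟨b, hb, rfl⟩ := hpq' (mem_insert_of_mem _ rfl)
  refine (hfδ ?_).false
  rw [Real.dist_eq, abs_lt]
  constructor <;> linarith [ha.1, ha.2, hb.1, hb.2]

/-- the image K of a non-constant continuous map γ : [0,1] → M into a metric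
space is a decomposable continuum: K is compact and connected and is the union of two
compact connected proper subsets. -/
theorem stmt9 {M : Type*} [MetricSpace M] (γ : Set.Icc (0 : ℝ) 1 → M)
    (hcont : Continuous γ) (hnc : ∃ s t : Set.Icc (0 : ℝ) 1, γ s ≠ γ t) :
    IsCompact (Set.range γ) ∧ IsConnected (Set.range γ) ∧
    ∃ K₁ K₂ : Set M,
      IsCompact K₁ ∧ IsConnected K₁ ∧ IsCompact K₂ ∧ IsConnected K₂ ∧
      K₁ ⊂ Set.range γ ∧ K₂ ⊂ Set.range γ ∧ K₁ ∪ K₂ = Set.range γ := by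
  obtain ⟨s, t, hst⟩ := hnc
  set η := IccExtend zero_le_one γ
  have hη : Continuous η := hcont.Icc_extend'
  have hηK (u : Set ℝ) : η '' u ⊆ range γ := (image_subset_range η u).trans (IccExtend_range _ γ).le
  have hpiece {a b : ℝ} (hab : a ≤ b) : IsCompact (η '' Icc a b) ∧ IsConnected (η '' Icc a b) :=
    ⟨isCompact_Icc.image hη, (isConnected_Icc hab).image _ hη.continuousOn⟩
  obtain ⟨h, hh, hsmall⟩ := ((CompactSpace.uniformContinuous_of_continuous hcont).comp
    (LipschitzWith.projIcc zero_le_one).uniformContinuous).exists_pos_forall_pair_not_subset_image_Icc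
    (dist_pos.mpr hst)
  have hexhaust : ∃ N : ℕ, η '' Icc 0 (N * h) = range γ := by
    obtain ⟨N, hN⟩ := Archimedean.arch 1 hh
    refine ⟨N, (hηK _).antisymm ?_⟩
    rintro _ ⟨u, rfl⟩
    exact ⟨u, ⟨u.2.1, u.2.2.trans (by simpa using hN)⟩, IccExtend_val _ _ u⟩
  have hstart : {η 0} ≠ range γ := by
    intro h0
    have hs : γ s ∈ ({η 0} : Set M) := h0 ▸ mem_range_self s
    have ht : γ t ∈ ({η 0} : Set M) := h0 ▸ mem_range_self t
    exact hst (hs.trans ht.symm)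
  obtain ⟨x, hx, hK₁, hunion⟩ := exists_image_Icc_ne_and_union_eq hh.le hexhaust hstart
  refine ⟨isCompact_range hcont, isConnected_range hcont, _, _, (hpiece hx).1, (hpiece hx).2,
    (hpiece (by linarith)).1, (hpiece (by linarith)).2, (hηK _).ssubset_of_ne hK₁,
    (hηK _).ssubset_of_ne fun hK => hsmall x ?_, hunion⟩
  exact hK ▸ pair_subset (mem_range_self s) (mem_range_self t)
end

section
/- Let Q be a hereditarily indecomposable continuum in a metric space, i.e. Q is compact and connected, and no compact connected subset K of Q is the union of two nonempty compact connected proper subsets of K. Then Q contains no non-trivial paths: every continuous map γ : [0,1] → Q is constant, so all the path-connected components of Q are singletons. -/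
/-!
A non-constant path `g` yields a sub-arc `[a, b]` on which `g a` is attained only at `a` and
`g b` only at `b`: take `a` to be the last time the path is at its starting point and `b` the first
time after `a` that it is at its end point. Splitting `[a, b]` at its midpoint `c`, the images of
`[a, c]` and `[c, b]` are subcontinua of `g '' [a, b]` covering it, the first missing `g b` and
the second missing `g a`. So `g '' [a, b]` is a decomposable subcontinuum.
-/

open Set

def IsDecomposable {X : Type*} [TopologicalSpace X] (K : Set X) : Prop :=
  ∃ K₁ K₂ : Set X, IsCompact K₁ ∧ IsConnected K₁ ∧ IsCompact K₂ ∧ IsConnected K₂ ∧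
    K₁ ⊂ K ∧ K₂ ⊂ K ∧ K₁ ∪ K₂ = K

section PathOnInterval

variable {X : Type*} [TopologicalSpace X] {g : ℝ → X} {a b : ℝ}

lemma exists_last_eq_left [T1Space X] (hg : ContinuousOn g (Icc a b)) (hab : a ≤ b) :
    ∃ a' ∈ Icc a b, g a' = g a ∧ ∀ u ∈ Ioc a' b, g u ≠ g a := by
  set A := Icc a b ∩ g ⁻¹' {g a}
  have hA : IsClosed A := hg.preimage_isClosed_of_isClosed isClosed_Icc isClosed_singleton
  have hAne : A.Nonempty := ⟨a, ⟨le_rfl, hab⟩, rfl⟩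
  have hAbdd : BddAbove A := bddAbove_Icc.mono inter_subset_left
  obtain ⟨ha'ab, ha'⟩ := hA.csSup_mem hAne hAbdd
  refine ⟨sSup A, ha'ab, ha', fun u hu hgu => ?_⟩
  exact (le_csSup hAbdd ⟨⟨ha'ab.1.trans hu.1.le, hu.2⟩, hgu⟩).not_gt hu.1

lemma exists_first_eq_right [T1Space X] (hg : ContinuousOn g (Icc a b)) (hab : a ≤ b) :
    ∃ b' ∈ Icc a b, g b' = g b ∧ ∀ u ∈ Ico a b', g u ≠ g b := by
  set B := Icc a b ∩ g ⁻¹' {g b}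
  have hB : IsClosed B := hg.preimage_isClosed_of_isClosed isClosed_Icc isClosed_singleton
  have hBne : B.Nonempty := ⟨b, ⟨hab, le_rfl⟩, rfl⟩
  have hBbdd : BddBelow B := bddBelow_Icc.mono inter_subset_left
  obtain ⟨hb'ab, hb'⟩ := hB.csInf_mem hBne hBbdd
  refine ⟨sInf B, hb'ab, hb', fun u hu hgu => ?_⟩
  exact (csInf_le hBbdd ⟨⟨hu.1, hu.2.le.trans hb'ab.2⟩, hgu⟩).not_gt hu.2

lemma exists_subarc_endpoints_unique [T1Space X] (hg : ContinuousOn g (Icc a b)) (hab : a ≤ b)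
    (hne : g a ≠ g b) :
    ∃ a' b', a' < b' ∧ (∀ u ∈ Ioc a' b', g u ≠ g a') ∧ ∀ u ∈ Ico a' b', g u ≠ g b' := by
  obtain ⟨a', ha'ab, ha', hlast⟩ := exists_last_eq_left hg hab
  have ha'b : a' ≤ b := ha'ab.2
  obtain ⟨b', hb'ab, hb', hfirst⟩ :=
    exists_first_eq_right (hg.mono (Icc_subset_Icc_left ha'ab.1)) ha'b
  have ha'b' : a' < b' := hb'ab.1.lt_of_ne fun h => hne (by rw [← ha', h, hb'])
  refine ⟨a', b', ha'b', fun u hu => ?_, fun u hu => ?_⟩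
  · rw [ha']
    exact hlast u ⟨hu.1, hu.2.trans hb'ab.2⟩
  · rw [hb']
    exact hfirst u hu

lemma isDecomposable_image_Icc (hg : ContinuousOn g (Icc a b)) (hab : a < b)
    (ha : ∀ u ∈ Ioc a b, g u ≠ g a) (hb : ∀ u ∈ Ico a b, g u ≠ g b) :
    IsDecomposable (g '' Icc a b) := by
  set c := (a + b) / 2
  have hac : a < c := left_lt_add_div_two.2 hab
  have hcb : c < b := add_div_two_lt_right.2 hab
  have hleft : Icc a c ⊆ Icc a b := Icc_subset_Icc_right hcb.le
  have hright : Icc c b ⊆ Icc a b := Icc_subset_Icc_left hac.le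
  refine ⟨g '' Icc a c, g '' Icc c b,
    isCompact_Icc.image_of_continuousOn (hg.mono hleft),
    (isConnected_Icc hac.le).image g (hg.mono hleft),
    isCompact_Icc.image_of_continuousOn (hg.mono hright),
    (isConnected_Icc hcb.le).image g (hg.mono hright),
    ⟨image_mono hleft, fun h => ?_⟩, ⟨image_mono hright, fun h => ?_⟩, ?_⟩
  · obtain ⟨u, hu, hgu⟩ := h ⟨b, right_mem_Icc.2 hab.le, rfl⟩
    exact hb u ⟨hu.1, hu.2.trans_lt hcb⟩ hgu
  · obtain ⟨u, hu, hgu⟩ := h ⟨a, left_mem_Icc.2 hab.le, rfl⟩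
    exact ha u ⟨hac.trans_le hu.1, hu.2⟩ hgu
  · rw [← image_union, Icc_union_Icc_eq_Icc hac.le hcb.le]

lemma exists_isDecomposable_image_Icc [T1Space X] (hg : Continuous g) (hne : g a ≠ g b) :
    ∃ a' b', a' < b' ∧ IsDecomposable (g '' Icc a' b') := by
  wlog hab : a ≤ b generalizing a b
  · exact this hne.symm (le_of_not_ge hab)
  obtain ⟨a', b', ha'b', ha', hb'⟩ :=
    exists_subarc_endpoints_unique hg.continuousOn hab hne
  exact ⟨a', b', ha'b', isDecomposable_image_Icc hg.continuousOn ha'b' ha' hb'⟩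

end PathOnInterval

theorem stmt10_general {M : Type*} [MetricSpace M] (Q : Set M)
    (hher : ∀ K : Set M, K ⊆ Q → IsCompact K → IsConnected K →
      ¬ ∃ K₁ K₂ : Set M,
          IsCompact K₁ ∧ IsConnected K₁ ∧ IsCompact K₂ ∧ IsConnected K₂ ∧
          K₁ ⊂ K ∧ K₂ ⊂ K ∧ K₁ ∪ K₂ = K) :
    ∀ γ : Set.Icc (0 : ℝ) 1 → M, Continuous γ → (∀ t, γ t ∈ Q) →
      ∀ s t : Set.Icc (0 : ℝ) 1, γ s = γ t := by
  intro γ hγ hQ s t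
  by_contra hne
  set g : ℝ → M := γ ∘ projIcc 0 1 zero_le_one
  have hg : Continuous g := hγ.comp continuous_projIcc
  obtain ⟨a, b, hab, hdec⟩ :=
    exists_isDecomposable_image_Icc (a := s) (b := t) hg (by simpa [g, projIcc_val] using hne)
  refine hher _ ?_ (isCompact_Icc.image hg) ((isConnected_Icc hab.le).image g hg.continuousOn) hdec
  rintro _ ⟨u, -, rfl⟩
  exact hQ _

/-- a hereditarily indecomposable continuum Q in a metric space contains no
non-trivial paths: every continuous map γ : [0,1] → Q is constant, so all path-connected
components of Q are singletons. -/
theorem stmt10 {M : Type*} [MetricSpace M] (Q : Set M)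
    (hQcomp : IsCompact Q) (hQconn : IsConnected Q)
    (hher : ∀ K : Set M, K ⊆ Q → IsCompact K → IsConnected K →
      ¬ ∃ K₁ K₂ : Set M,
          IsCompact K₁ ∧ IsConnected K₁ ∧ IsCompact K₂ ∧ IsConnected K₂ ∧
          K₁ ⊂ K ∧ K₂ ⊂ K ∧ K₁ ∪ K₂ = K) :
    ∀ γ : Set.Icc (0 : ℝ) 1 → M, Continuous γ → (∀ t, γ t ∈ Q) →
      ∀ s t : Set.Icc (0 : ℝ) 1, γ s = γ t :=
  stmt10_general Q hher
end

section
/- Let P ⊆ [0, π] × (−1/4, 1/4) be a compact connected subset of ℝ² such that P ∩ ({0} × ℝ) = {(0,0)}, P ∩ ({π} × ℝ) = {(π, 0)}, and every continuous map γ : [0,1] → P is constant. For k ∈ ℤ set P_k = P + (kπ, 0), and let P̃ = ⋃_{k∈ℤ} P_k. Then P̃ is an unbounded connected subset of ℝ × (−1/4, 1/4) containing (0,0), and every continuous map γ : [0,1] → P̃ is constant, i.e. P̃ contains no non-trivial paths. -/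
open Set

/-!
The translates `P + (kπ, 0)` are connected and consecutive ones share the point `((k+1)π, 0)`,
so their union is connected; it contains every `(kπ, 0)`, so it is unbounded. For paths, the
boundary hypotheses say that the union meets each vertical line `λ = kπ` in the single point
`(kπ, 0)`. A path whose first coordinate enters an open strip `kπ < λ < (k+1)π` can therefore be
clamped continuously onto the `k`-th translate, which carries no non-trivial path, and this forces
the path to be constant. A path that never enters such a strip has its first coordinate in the
discrete set `πℤ`, hence constant, and is then the constant point `(kπ, 0)`.
-/

def NoNontrivialPath {X : Type*} [TopologicalSpace X] (S : Set X) : Prop :=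
  ∀ γ : Icc (0 : ℝ) 1 → X, Continuous γ → (∀ t, γ t ∈ S) → ∀ s t, γ s = γ t

theorem NoNontrivialPath.image_homeomorph {X Y : Type*} [TopologicalSpace X] [TopologicalSpace Y]
    {S : Set X} (hS : NoNontrivialPath S) (e : X ≃ₜ Y) : NoNontrivialPath (e '' S) := by
  intro γ hγ hγS s t
  have hpull : ∀ t, e.symm (γ t) ∈ S := fun t => by
    obtain ⟨x, hx, hxγ⟩ := hγS t
    rwa [← hxγ, e.symm_apply_apply]
  simpa using congrArg e (hS _ (e.symm.continuous.comp hγ) hpull s t)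

theorem NoNontrivialPath.eq_of_fst_mem_Ioo {S Q : Set (ℝ × ℝ)} {a b c d : ℝ}
    (hQ : NoNontrivialPath Q) (ha : ∀ p ∈ S, p.1 = a → p = (a, c))
    (hb : ∀ p ∈ S, p.1 = b → p = (b, d)) (hac : (a, c) ∈ Q) (hbd : (b, d) ∈ Q)
    (hSQ : ∀ p ∈ S, p.1 ∈ Ioo a b → p ∈ Q) {γ : Icc (0 : ℝ) 1 → ℝ × ℝ} (hγ : Continuous γ)
    (hγS : ∀ t, γ t ∈ S) {t₀ : Icc (0 : ℝ) 1} (ht₀ : (γ t₀).1 ∈ Ioo a b) (t : Icc (0 : ℝ) 1) :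
    γ t = γ t₀ := by
  have hab : a < b := ht₀.1.trans ht₀.2
  set σ : Icc (0 : ℝ) 1 → ℝ × ℝ := fun t =>
    if (γ t).1 ≤ a then (a, c) else if b ≤ (γ t).1 then (b, d) else γ t with hσ
  have hσ_cont : Continuous σ := by
    have hfst : Continuous fun t => (γ t).1 := continuous_fst.comp hγ
    refine Continuous.if_le continuous_const ?_ hfst continuous_const fun t ht => ?_
    · exact Continuous.if_le continuous_const hγ continuous_const hfst
        fun t ht => (hb _ (hγS t) ht.symm).symm
    · rw [ha _ (hγS t) ht, if_neg (not_le.2 hab)]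
  have hσQ : ∀ t, σ t ∈ Q := fun t => by
    simp only [hσ]
    split_ifs with h₁ h₂
    · exact hac
    · exact hbd
    · exact hSQ _ (hγS t) ⟨not_le.1 h₁, not_le.1 h₂⟩
  have hσt₀ : σ t₀ = γ t₀ := by simp only [hσ, if_neg (not_le.2 ht₀.1), if_neg (not_le.2 ht₀.2)]
  have h := hσt₀ ▸ hQ σ hσ_cont hσQ t t₀
  simp only [hσ] at h
  split_ifs at h
  · exact absurd (congrArg Prod.fst h) ht₀.1.ne
  · exact absurd (congrArg Prod.fst h) ht₀.2.ne'
  · exact h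

def shiftFst (L : ℝ) (k : ℤ) (p : ℝ × ℝ) : ℝ × ℝ := (p.1 + k * L, p.2)

theorem shiftFst_eq_addRight (L : ℝ) (k : ℤ) :
    shiftFst L k = Homeomorph.addRight ((k : ℝ) * L, (0 : ℝ)) := by
  ext p <;> simp [shiftFst]

def periodicUnion (L : ℝ) (P : Set (ℝ × ℝ)) : Set (ℝ × ℝ) := ⋃ k : ℤ, shiftFst L k '' P

section PeriodicUnion

variable {L : ℝ} {P : Set (ℝ × ℝ)}

theorem periodicUnion_subset_univ_prod {s t : Set ℝ} (hP : P ⊆ s ×ˢ t) :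
    periodicUnion L P ⊆ univ ×ˢ t := by
  simp only [periodicUnion, iUnion_subset_iff, image_subset_iff]
  exact fun _ p hp => ⟨trivial, (hP hp).2⟩

theorem int_mul_mem_periodicUnion (h0 : ((0 : ℝ), (0 : ℝ)) ∈ P) (k : ℤ) :
    ((k : ℝ) * L, (0 : ℝ)) ∈ periodicUnion L P :=
  mem_iUnion.2 ⟨k, (0, 0), h0, by simp [shiftFst]⟩

theorem not_isBounded_periodicUnion (hL : 0 < L) (h0 : ((0 : ℝ), (0 : ℝ)) ∈ P) :
    ¬ Bornology.IsBounded (periodicUnion L P) := by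
  intro hbdd
  obtain ⟨C, hC⟩ := isBounded_iff_forall_norm_le.1 hbdd
  obtain ⟨n, hn⟩ := exists_nat_gt (C / L)
  have hnorm := hC _ (int_mul_mem_periodicUnion h0 n)
  have hCn : C < n * L := (div_lt_iff₀ hL).1 hn
  simp only [Int.cast_natCast, Prod.norm_mk, norm_zero, Real.norm_eq_abs] at hnorm
  linarith [le_abs_self ((n : ℝ) * L), le_max_left |(n : ℝ) * L| 0]

theorem IsConnected.periodicUnion (hP : IsConnected P) (h0 : ((0 : ℝ), (0 : ℝ)) ∈ P)
    (hL : (L, (0 : ℝ)) ∈ P) : IsConnected (periodicUnion L P) := by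
  refine IsConnected.iUnion_of_chain
    (fun k => hP.image _ (shiftFst_eq_addRight L k ▸ (Homeomorph.continuous _).continuousOn))
    fun k => ⟨((k : ℝ) * L + L, 0), ⟨(L, 0), hL, ?_⟩, ⟨(0, 0), h0, ?_⟩⟩
  · simp [shiftFst, add_comm]
  · simp [shiftFst, Order.succ_eq_add_one, add_mul]

theorem fst_mem_Icc_of_mem_shiftFst_image (hP : ∀ p ∈ P, p.1 ∈ Icc 0 L) {k : ℤ} {p : ℝ × ℝ}
    (hp : p ∈ shiftFst L k '' P) : p.1 ∈ Icc (k * L) (k * L + L) := by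
  obtain ⟨q, hq, rfl⟩ := hp
  obtain ⟨h₁, h₂⟩ := hP q hq
  exact ⟨by simp [shiftFst]; linarith, by simp [shiftFst]; linarith⟩

theorem eq_of_mem_periodicUnion_of_fst_eq (hL : 0 < L) (hP : ∀ p ∈ P, p.1 ∈ Icc 0 L)
    (hP0 : P ∩ {p | p.1 = 0} = {(0, 0)}) (hPL : P ∩ {p | p.1 = L} = {(L, 0)})
    {p : ℝ × ℝ} (hp : p ∈ periodicUnion L P) {k : ℤ} (hpk : p.1 = k * L) :
    p = ((k : ℝ) * L, 0) := by
  obtain ⟨m, q, hq, rfl⟩ := mem_iUnion.1 hp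
  have hq₁ : q.1 = ((k - m : ℤ) : ℝ) * L := by
    simp only [shiftFst] at hpk
    push_cast
    linarith
  obtain ⟨hq₀, hqL⟩ := hP q hq
  have hkm₀ : (0 : ℝ) ≤ (k - m : ℤ) := le_of_mul_le_mul_right (by linarith) hL
  have hkm₁ : ((k - m : ℤ) : ℝ) ≤ 1 := le_of_mul_le_mul_right (by linarith) hL
  obtain hkm | hkm : k = m ∨ k = m + 1 := by
    have : (0 : ℤ) ≤ k - m := by exact_mod_cast hkm₀
    have : k - m ≤ (1 : ℤ) := by exact_mod_cast hkm₁
    omega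
  · have : q ∈ P ∩ {p | p.1 = 0} := ⟨hq, by simp [hq₁, hkm]⟩
    rw [hP0, mem_singleton_iff] at this
    simp [this, shiftFst, hkm]
  · have : q ∈ P ∩ {p | p.1 = L} := ⟨hq, by simp [hq₁, hkm]⟩
    rw [hPL, mem_singleton_iff] at this
    simp only [this, shiftFst, hkm, Int.cast_add, Int.cast_one, Prod.mk.injEq, and_true]
    ring

theorem mem_shiftFst_image_of_mem_periodicUnion (hL : 0 < L) (hP : ∀ p ∈ P, p.1 ∈ Icc 0 L)
    {p : ℝ × ℝ} (hp : p ∈ periodicUnion L P) {k : ℤ} (hpk : p.1 ∈ Ioo (k * L) (k * L + L)) :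
    p ∈ shiftFst L k '' P := by
  obtain ⟨m, hm⟩ := mem_iUnion.1 hp
  obtain ⟨hm₁, hm₂⟩ := fst_mem_Icc_of_mem_shiftFst_image hP hm
  have hmk : (m : ℝ) < k + 1 := lt_of_mul_lt_mul_right (by linarith [hpk.2]) hL.le
  have hkm : (k : ℝ) < m + 1 := lt_of_mul_lt_mul_right (by linarith [hpk.1]) hL.le
  obtain rfl : m = k := by
    have : m < k + 1 := by exact_mod_cast hmk
    have : k < m + 1 := by exact_mod_cast hkm
    omega
  exact hm

theorem fst_mem_zmultiples_or_mem_Ioo (hL : 0 < L) (x : ℝ) :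
    x ∈ AddSubgroup.zmultiples L ∨ ∃ k : ℤ, x ∈ Ioo (k * L) (k * L + L) := by
  set k := ⌊x / L⌋
  have h₁ : (k : ℝ) * L ≤ x := (le_div_iff₀ hL).1 (Int.floor_le _)
  have h₂ : x < k * L + L := by
    have := (div_lt_iff₀ hL).1 (Int.lt_floor_add_one (x / L))
    linarith
  rcases h₁.eq_or_lt with h | h
  · exact Or.inl ⟨k, by simp [h]⟩
  · exact Or.inr ⟨k, h, h₂⟩

theorem noNontrivialPath_periodicUnion (hL : 0 < L) (hP : ∀ p ∈ P, p.1 ∈ Icc 0 L)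
    (hP0 : P ∩ {p | p.1 = 0} = {(0, 0)}) (hPL : P ∩ {p | p.1 = L} = {(L, 0)})
    (hpath : NoNontrivialPath P) : NoNontrivialPath (periodicUnion L P) := by
  intro γ hγ hγS s t
  have hjunction : ∀ p ∈ periodicUnion L P, ∀ k : ℤ, p.1 = k * L → p = (k * L, 0) :=
    fun _ hp _ => eq_of_mem_periodicUnion_of_fst_eq hL hP hP0 hPL hp
  by_cases hstrip : ∃ t₀ : Icc (0 : ℝ) 1, ∃ k : ℤ, (γ t₀).1 ∈ Ioo (k * L) (k * L + L)
  · obtain ⟨t₀, k, ht₀⟩ := hstrip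
    have hQ := shiftFst_eq_addRight L k ▸ hpath.image_homeomorph (Homeomorph.addRight _)
    have h0 : ((0 : ℝ), (0 : ℝ)) ∈ P := (hP0.ge rfl).1
    have hLP : (L, (0 : ℝ)) ∈ P := (hPL.ge rfl).1
    have hnext : ∀ p ∈ periodicUnion L P, p.1 = k * L + L → p = (k * L + L, 0) :=
      fun p hp hpk => by
        simpa [add_mul] using hjunction p hp (k + 1) (by push_cast; linarith)
    have hγt := fun t => hQ.eq_of_fst_mem_Ioo (fun p hp => hjunction p hp k) hnext
      ⟨(0, 0), h0, by simp [shiftFst]⟩ ⟨(L, 0), hLP, by simp [shiftFst, add_comm]⟩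
      (fun p hp => mem_shiftFst_image_of_mem_periodicUnion hL hP hp) hγ hγS ht₀ t
    rw [hγt s, hγt t]
  · simp only [not_exists] at hstrip
    have hdiscrete : ∀ t, (γ t).1 ∈ AddSubgroup.zmultiples L := fun t =>
      ((fst_mem_zmultiples_or_mem_Ioo hL _).resolve_right fun ⟨k, hk⟩ => hstrip t k hk)
    have hfst : (γ s).1 = (γ t).1 :=
      isPreconnected_univ.constant_of_mapsTo
        (SetLike.isDiscrete_iff_discreteTopology.2 inferInstance)
        (continuous_fst.comp hγ).continuousOn (fun t _ => hdiscrete t) trivial trivial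
    obtain ⟨k, hk⟩ := AddSubgroup.mem_zmultiples_iff.1 (hdiscrete s)
    rw [zsmul_eq_mul] at hk
    rw [hjunction _ (hγS s) k hk.symm, hjunction _ (hγS t) k (hfst ▸ hk.symm)]

end PeriodicUnion

theorem stmt11_general (P : Set (ℝ × ℝ))
    (hPsub : P ⊆ Icc 0 Real.pi ×ˢ Ioo (-(1 / 4) : ℝ) (1 / 4))
    (hPconn : IsConnected P)
    (hP0 : P ∩ {p : ℝ × ℝ | p.1 = 0} = {((0 : ℝ), (0 : ℝ))})
    (hPπ : P ∩ {p : ℝ × ℝ | p.1 = Real.pi} = {(Real.pi, (0 : ℝ))})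
    (hPnopath : ∀ γ : Set.Icc (0 : ℝ) 1 → ℝ × ℝ, Continuous γ → (∀ t, γ t ∈ P) →
      ∀ s t : Set.Icc (0 : ℝ) 1, γ s = γ t)
    (Ptil : Set (ℝ × ℝ))
    (hPtil : Ptil = ⋃ k : ℤ, (fun p : ℝ × ℝ => (p.1 + (k : ℝ) * Real.pi, p.2)) '' P) :
    Ptil ⊆ univ ×ˢ Ioo (-(1 / 4) : ℝ) (1 / 4) ∧
    ¬ Bornology.IsBounded Ptil ∧
    IsConnected Ptil ∧
    ((0 : ℝ), (0 : ℝ)) ∈ Ptil ∧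
    (∀ γ : Set.Icc (0 : ℝ) 1 → ℝ × ℝ, Continuous γ → (∀ t, γ t ∈ Ptil) →
      ∀ s t : Set.Icc (0 : ℝ) 1, γ s = γ t) := by
  change Ptil = periodicUnion Real.pi P at hPtil
  subst hPtil
  have h0 : ((0 : ℝ), (0 : ℝ)) ∈ P := (hP0.ge rfl).1
  have hfst : ∀ p ∈ P, p.1 ∈ Icc 0 Real.pi := fun p hp => (hPsub hp).1
  refine ⟨periodicUnion_subset_univ_prod hPsub, not_isBounded_periodicUnion Real.pi_pos h0,
    hPconn.periodicUnion h0 (hPπ.ge rfl).1, by simpa using int_mul_mem_periodicUnion h0 0,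
    noNontrivialPath_periodicUnion Real.pi_pos hfst hP0 hPπ hPnopath⟩

/-- if P ⊆ [0,π] × (−1/4,1/4) is a compact connected set meeting {λ=0} only
at (0,0) and {λ=π} only at (π,0), containing no non-trivial paths, then the union P̃ of the
translates P + (kπ, 0), k ∈ ℤ, is an unbounded connected subset of ℝ × (−1/4,1/4) containing
(0,0) and containing no non-trivial paths. -/
theorem stmt11 (P : Set (ℝ × ℝ))
    (hPsub : P ⊆ Icc 0 Real.pi ×ˢ Ioo (-(1 / 4) : ℝ) (1 / 4))
    (hPcomp : IsCompact P) (hPconn : IsConnected P)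
    (hP0 : P ∩ {p : ℝ × ℝ | p.1 = 0} = {((0 : ℝ), (0 : ℝ))})
    (hPπ : P ∩ {p : ℝ × ℝ | p.1 = Real.pi} = {(Real.pi, (0 : ℝ))})
    (hPnopath : ∀ γ : Set.Icc (0 : ℝ) 1 → ℝ × ℝ, Continuous γ → (∀ t, γ t ∈ P) →
      ∀ s t : Set.Icc (0 : ℝ) 1, γ s = γ t)
    (Ptil : Set (ℝ × ℝ))
    (hPtil : Ptil = ⋃ k : ℤ, (fun p : ℝ × ℝ => (p.1 + (k : ℝ) * Real.pi, p.2)) '' P) :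
    Ptil ⊆ univ ×ˢ Ioo (-(1 / 4) : ℝ) (1 / 4) ∧
    ¬ Bornology.IsBounded Ptil ∧
    IsConnected Ptil ∧
    ((0 : ℝ), (0 : ℝ)) ∈ Ptil ∧
    (∀ γ : Set.Icc (0 : ℝ) 1 → ℝ × ℝ, Continuous γ → (∀ t, γ t ∈ Ptil) →
      ∀ s t : Set.Icc (0 : ℝ) 1, γ s = γ t) :=
  stmt11_general P hPsub hPconn hP0 hPπ hPnopath Ptil hPtil
end

section
/- Fix α > 0 and let ϖ : ℝ → ℝ be an infinitely differentiable even function, non-increasing on [0, ∞), with ϖ(0) = 1 and ϖ(r) = 0 for all r ≥ α/2. Define ω(λ, x) = λ ϖ(x/λ) for λ ≠ 0 and ω(0, x) = 0. Then: (i) the partial derivative ∂ω/∂λ exists at every point of ℝ², with ∂ω/∂λ(0,0) = 1 and ∂ω/∂λ(0, x) = 0 for x ≠ 0, so ∂ω/∂λ is not continuous at (0,0); (ii) the function f(λ, x) = x·ω(λ, x) is continuously differentiable on all of ℝ²; (iii) the mixed partial derivative ∂²f/∂λ∂x exists at every point of ℝ², equals 1 at every point (λ, 0) with λ ≠ 0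 and equals 0 at every point (0, x), and hence is not continuous at (0,0). -/
open Set

set_option maxHeartbeats 4000000 in
/-- with ϖ smooth, even, non-increasing on [0,∞), ϖ(0) = 1 and ϖ(r) = 0 for
r ≥ α/2, and ω(λ,x) = λϖ(x/λ) (λ ≠ 0), ω(0,x) = 0:
(i) ∂ω/∂λ exists everywhere, equals 1 at (0,0) and 0 at (0,x) for x ≠ 0, and is not
continuous at (0,0);
(ii) f(λ,x) = x·ω(λ,x) is continuously differentiable on ℝ²;
(iii) the mixed partial ∂²f/∂λ∂x (first λ, then x) exists everywhere, equals 1 at (λ,0) for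
λ ≠ 0 and 0 at (0,x), hence is not continuous at (0,0). -/
theorem stmt13 (α : ℝ) (hα : 0 < α) (w : ℝ → ℝ)
    (hw_smooth : ContDiff ℝ (⊤ : ℕ∞) w) (hw_even : ∀ r : ℝ, w (-r) = w r)
    (hw_mono : AntitoneOn w (Ici (0 : ℝ))) (hw0 : w 0 = 1)
    (hw_zero : ∀ r : ℝ, α / 2 ≤ r → w r = 0)
    (ω : ℝ → ℝ → ℝ)
    (hω0 : ∀ x : ℝ, ω 0 x = 0)
    (hω : ∀ l : ℝ, l ≠ 0 → ∀ x : ℝ, ω l x = l * w (x / l))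
    (f : ℝ × ℝ → ℝ) (hf : ∀ l x : ℝ, f (l, x) = x * ω l x) :
    -- (i)
    ((∀ l x : ℝ, DifferentiableAt ℝ (fun l' => ω l' x) l) ∧
      deriv (fun l' => ω l' 0) 0 = 1 ∧
      (∀ x : ℝ, x ≠ 0 → deriv (fun l' => ω l' x) 0 = 0) ∧
      ¬ ContinuousAt (fun p : ℝ × ℝ => deriv (fun l' => ω l' p.2) p.1) (0, 0)) ∧
    -- (ii)
    ContDiff ℝ 1 f ∧
    -- (iii)
    ((∀ l x : ℝ, DifferentiableAt ℝ (fun y => deriv (fun l' => f (l', y)) l) x) ∧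
      (∀ l : ℝ, l ≠ 0 → deriv (fun y => deriv (fun l' => f (l', y)) l) 0 = 1) ∧
      (∀ x : ℝ, deriv (fun y => deriv (fun l' => f (l', y)) 0) x = 0) ∧
      ¬ ContinuousAt
        (fun p : ℝ × ℝ => deriv (fun y => deriv (fun l' => f (l', y)) p.1) p.2) (0, 0)) := by
  have hw : ContDiff ℝ ((⊤ : ℕ∞) : WithTop ℕ∞) w := hw_smooth.of_le (by simp)
  set dw := deriv w with hdw_def
  have hwd : Differentiable ℝ w := hw.differentiable (by simp)
  have hdw_smooth : ContDiff ℝ ((⊤ : ℕ∞) : WithTop ℕ∞) dw := (contDiff_infty_iff_deriv.mp hw).2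
  have hdwd : Differentiable ℝ dw := hdw_smooth.differentiable (by simp)
  have hdw_cont : Continuous dw := hdwd.continuous
  -- w vanishes for |r| ≥ α/2
  have L1 : ∀ r : ℝ, α / 2 ≤ |r| → w r = 0 := by
    intro r hr
    rcases le_or_gt 0 r with h | h
    · exact hw_zero r (by rwa [abs_of_nonneg h] at hr)
    · have h2 := hw_even (-r)
      simp only [neg_neg] at h2
      rw [h2]
      exact hw_zero (-r) (by rwa [abs_of_neg h] at hr)
  have L1' : ∀ r : ℝ, α / 2 < |r| → dw r = 0 := by
    intro r hr
    have hop : IsOpen {s : ℝ | α / 2 < |s|} := isOpen_lt continuous_const continuous_abs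
    have hev : w =ᶠ[nhds r] (fun _ => 0) := by
      filter_upwards [hop.mem_nhds hr] with s hs using L1 s hs.le
    rw [hdw_def, hev.deriv_eq]
    simp
  have Lwb : ∀ r : ℝ, |w r| ≤ 1 := by
    intro r
    have habs : w r = w |r| := by
      rcases le_or_gt 0 r with h | h
      · rw [abs_of_nonneg h]
      · rw [abs_of_neg h, hw_even r]
    rcases le_or_gt (|r|) (α / 2) with h | h
    · have h1 : w |r| ≤ w 0 := hw_mono (le_refl 0 |>.trans (le_refl 0) |> fun _ => self_mem_Ici) (abs_nonneg r) (abs_nonneg r)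
      have h2 : w (α / 2) ≤ w |r| := hw_mono (abs_nonneg r) (by positivity : (0:ℝ) ≤ α/2) h
      rw [hw_zero (α/2) le_rfl] at h2
      rw [habs, abs_le]
      constructor <;> linarith [hw0 ▸ h1]
    · rw [habs, L1 (|r|) (by rw [abs_abs]; exact h.le)]
      norm_num
  -- bound on dw
  obtain ⟨C0, hC0⟩ := (isCompact_Icc (a := -(α/2)) (b := α/2)).exists_bound_of_continuousOn hdw_cont.continuousOn
  set C := max C0 0 with hCdef
  have hCnn : (0:ℝ) ≤ C := le_max_right _ _
  have hCb : ∀ r : ℝ, |r| ≤ α / 2 → |dw r| ≤ C := by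
    intro r hr
    have hm : r ∈ Icc (-(α/2)) (α/2) := by
      rw [mem_Icc]; constructor <;> [linarith [neg_abs_le r]; linarith [le_abs_self r]]
    calc |dw r| = ‖dw r‖ := (Real.norm_eq_abs _).symm
      _ ≤ C0 := hC0 r hm
      _ ≤ C := le_max_left _ _
  -- vanishing of ω and f
  have hωz : ∀ x l : ℝ, α / 2 * |l| < |x| → ω l x = 0 := by
    intro x l h
    rcases eq_or_ne l 0 with rfl | hl
    · exact hω0 x
    · rw [hω l hl x, L1 (x / l) ?_, mul_zero]
      rw [abs_div, le_div_iff₀ (abs_pos.mpr hl)]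
      exact h.le
  have hfz : ∀ p : ℝ × ℝ, α / 2 * |p.1| < |p.2| → f p = 0 := by
    intro p hp
    rw [show f p = p.2 * ω p.1 p.2 from hf p.1 p.2, hωz p.2 p.1 hp, mul_zero]
  have Sopen : IsOpen {p : ℝ × ℝ | α / 2 * |p.1| < |p.2|} :=
    isOpen_lt (continuous_const.mul (continuous_abs.comp continuous_fst))
      (continuous_abs.comp continuous_snd)
  have hfev : ∀ x : ℝ, x ≠ 0 → ∀ᶠ p in nhds ((0:ℝ), x), f p = 0 := by
    intro x hx
    have hmem : ((0:ℝ), x) ∈ {p : ℝ × ℝ | α / 2 * |p.1| < |p.2|} := by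
      simp [abs_pos.mpr hx]
    filter_upwards [Sopen.mem_nhds hmem] with p hp using hfz p hp
  have hωev : ∀ x : ℝ, x ≠ 0 → ∀ᶠ l in nhds (0:ℝ), ω l x = 0 := by
    intro x hx
    have hop : IsOpen {l : ℝ | α / 2 * |l| < |x|} :=
      isOpen_lt (continuous_const.mul continuous_abs) continuous_const
    have hmem : (0:ℝ) ∈ {l : ℝ | α / 2 * |l| < |x|} := by simp [abs_pos.mpr hx]
    filter_upwards [hop.mem_nhds hmem] with l hl using hωz x l hl
  have hω00 : ∀ l : ℝ, ω l 0 = l := by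
    intro l
    rcases eq_or_ne l 0 with rfl | hl
    · exact hω0 0
    · rw [hω l hl 0, zero_div, hw0, mul_one]
  -- Part (i)
  have diff_i : ∀ l x : ℝ, DifferentiableAt ℝ (fun l' => ω l' x) l := by
    intro l x
    rcases eq_or_ne l 0 with rfl | hl
    · rcases eq_or_ne x 0 with rfl | hx
      · have he : (fun l' => ω l' 0) = fun l' => l' := funext hω00
        rw [he]; exact differentiableAt_fun_id
      · exact (differentiableAt_const (0:ℝ)).congr_of_eventuallyEq (hωev x hx)
    · have hF : DifferentiableAt ℝ (fun l' => l' * w (x / l')) l := by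
        apply DifferentiableAt.mul differentiableAt_fun_id
        exact (hwd (x / l)).comp l ((differentiableAt_const x).div differentiableAt_fun_id hl)
      apply hF.congr_of_eventuallyEq
      filter_upwards [eventually_ne_nhds hl] with l' hl' using hω l' hl' x
  have di0 : deriv (fun l' => ω l' 0) 0 = 1 := by
    have he : (fun l' => ω l' 0) = fun l' => l' := funext hω00
    rw [he, deriv_id'']
  have dix : ∀ x : ℝ, x ≠ 0 → deriv (fun l' => ω l' x) 0 = 0 := by
    intro x hx
    have h : (fun l' => ω l' x) =ᶠ[nhds (0:ℝ)] (fun _ => 0) := hωev x hx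
    rw [h.deriv_eq]; simp
  have ncont_i : ¬ ContinuousAt (fun p : ℝ × ℝ => deriv (fun l' => ω l' p.2) p.1) (0, 0) := by
    intro h
    have hseq : Filter.Tendsto (fun n : ℕ => ((0:ℝ), (1:ℝ)/(n+1))) Filter.atTop (nhds ((0:ℝ),(0:ℝ))) := by
      refine Filter.Tendsto.prodMk_nhds tendsto_const_nhds ?_
      exact tendsto_one_div_add_atTop_nhds_zero_nat
    have h2 : Filter.Tendsto (fun n : ℕ => deriv (fun l' => ω l' ((1:ℝ)/(n+1))) 0)
        Filter.atTop (nhds (deriv (fun l' => ω l' 0) 0)) := h.tendsto.comp hseq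
    rw [di0] at h2
    have h2' : Filter.Tendsto (fun _ : ℕ => (0:ℝ)) Filter.atTop (nhds 1) :=
      h2.congr fun n => dix _ (by positivity)
    have := tendsto_nhds_unique h2' tendsto_const_nhds
    norm_num at this
  -- operator norm bound
  have normL : ∀ L : ℝ × ℝ →L[ℝ] ℝ, ‖L‖ ≤ |L (1, 0)| + |L (0, 1)| := by
    intro L
    apply L.opNorm_le_bound (by positivity)
    intro p
    have hp : p = p.1 • ((1:ℝ), (0:ℝ)) + p.2 • ((0:ℝ), (1:ℝ)) := by
      ext <;> simp
    have hLp : L p = p.1 * L (1, 0) + p.2 * L (0, 1) := by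
      conv_lhs => rw [hp]
      rw [map_add, map_smul, map_smul]
      simp [smul_eq_mul]
    rw [hLp, Real.norm_eq_abs]
    have h1 : |p.1| ≤ ‖p‖ := by rw [← Real.norm_eq_abs]; exact norm_fst_le p
    have h2 : |p.2| ≤ ‖p‖ := by rw [← Real.norm_eq_abs]; exact norm_snd_le p
    calc |p.1 * L (1,0) + p.2 * L (0,1)| ≤ |p.1 * L (1,0)| + |p.2 * L (0,1)| := abs_add_le _ _
      _ = |p.1| * |L (1,0)| + |p.2| * |L (0,1)| := by rw [abs_mul, abs_mul]
      _ ≤ ‖p‖ * |L (1,0)| + ‖p‖ * |L (0,1)| := by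
          nlinarith [mul_le_mul_of_nonneg_right h1 (abs_nonneg (L (1,0))),
            mul_le_mul_of_nonneg_right h2 (abs_nonneg (L (0,1)))]
      _ = (|L (1,0)| + |L (0,1)|) * ‖p‖ := by ring
  -- fderiv at points with l ≠ 0
  have hsopen : IsOpen {p : ℝ × ℝ | p.1 ≠ 0} := isOpen_ne.preimage continuous_fst
  have hFDa : ∀ l x : ℝ, l ≠ 0 → ∃ L : ℝ × ℝ →L[ℝ] ℝ, HasFDerivAt f L (l, x) ∧
      L (1, 0) = x * w (x / l) - x ^ 2 / l * dw (x / l) ∧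
      L (0, 1) = l * w (x / l) + x * dw (x / l) := by
    intro l x hl
    have hinv : HasFDerivAt (fun p : ℝ × ℝ => (p.1)⁻¹)
        ((-(l ^ 2)⁻¹) • ContinuousLinearMap.fst ℝ ℝ ℝ) (l, x) :=
      (hasDerivAt_inv hl).comp_hasFDerivAt (l, x) hasFDerivAt_fst
    have hq := hasFDerivAt_snd.mul hinv
    have hwq := ((hwd (x * l⁻¹)).hasDerivAt).comp_hasFDerivAt ((l, x) : ℝ × ℝ) hq
    have hG := hasFDerivAt_fst.mul hwq
    have hF := hasFDerivAt_snd.mul hG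
    have hevf : f =ᶠ[nhds ((l, x) : ℝ × ℝ)]
        (fun p : ℝ × ℝ => p.2 * (p.1 * w (p.2 * (p.1)⁻¹))) := by
      filter_upwards [hsopen.mem_nhds hl] with p hp
      rw [show f p = p.2 * ω p.1 p.2 from hf p.1 p.2, hω p.1 hp, div_eq_mul_inv]
    refine ⟨_, hF.congr_of_eventuallyEq hevf, ?_, ?_⟩
    · simp only [ContinuousLinearMap.add_apply, ContinuousLinearMap.smul_apply,
        ContinuousLinearMap.coe_fst', ContinuousLinearMap.coe_snd', smul_eq_mul,
        div_eq_mul_inv, Function.comp_apply, Pi.mul_apply, ← hdw_def]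
      field_simp
      ring
    · simp only [ContinuousLinearMap.add_apply, ContinuousLinearMap.smul_apply,
        ContinuousLinearMap.coe_fst', ContinuousLinearMap.coe_snd', smul_eq_mul,
        div_eq_mul_inv, Function.comp_apply, Pi.mul_apply, ← hdw_def]
      field_simp
      ring
  -- quadratic bound on f
  have hfb : ∀ p : ℝ × ℝ, |f p| ≤ α / 2 * p.1 ^ 2 := by
    intro p
    rcases lt_or_ge (α / 2 * |p.1|) (|p.2|) with h | h
    · rw [hfz p h, abs_zero]
      positivity
    · rcases eq_or_ne p.1 0 with h0 | h0
      · rw [show f p = p.2 * ω p.1 p.2 from hf p.1 p.2, h0, hω0, mul_zero, abs_zero]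
        positivity
      · rw [show f p = p.2 * ω p.1 p.2 from hf p.1 p.2, hω p.1 h0]
        have hb := Lwb (p.2 / p.1)
        have e1 : |p.2 * (p.1 * w (p.2 / p.1))| = |p.2| * (|p.1| * |w (p.2/p.1)|) := by
          rw [abs_mul, abs_mul]
        rw [e1]
        have h2 : α / 2 * p.1 ^ 2 = (α/2 * |p.1|) * |p.1| := by
          rw [← sq_abs p.1]; ring
        rw [h2]
        have hann := abs_nonneg p.1
        have hbnn := abs_nonneg p.2
        have s1 : |p.1| * |w (p.2 / p.1)| ≤ |p.1| :=
          le_trans (mul_le_mul_of_nonneg_left hb hann) (by rw [mul_one])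
        have s2 : |p.2| * (|p.1| * |w (p.2 / p.1)|) ≤ |p.2| * |p.1| :=
          mul_le_mul_of_nonneg_left s1 hbnn
        have s3 : |p.2| * |p.1| ≤ α / 2 * |p.1| * |p.1| := by
          nlinarith [mul_le_mul_of_nonneg_right h hann]
        linarith
  have hFD00 : HasFDerivAt f (0 : ℝ × ℝ →L[ℝ] ℝ) ((0,0) : ℝ × ℝ) := by
    rw [hasFDerivAt_iff_isLittleO_nhds_zero]
    rw [Asymptotics.isLittleO_iff]
    intro c hc
    have hpos : (0:ℝ) < 2 * c / α := by positivity
    filter_upwards [Metric.ball_mem_nhds (0 : ℝ × ℝ) hpos] with p hp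
    rw [mem_ball_zero_iff] at hp
    have hf00 : f (0, 0) = 0 := by rw [hf]; ring
    have hadd : ((0,0) : ℝ × ℝ) + p = p := by ext <;> simp
    rw [hadd, hf00]
    simp only [ContinuousLinearMap.zero_apply, sub_zero]
    have h1 := hfb p
    have h2 : |p.1| ≤ ‖p‖ := by rw [← Real.norm_eq_abs]; exact norm_fst_le p
    have h3 : ‖p‖ < 2 * c / α := hp
    rw [Real.norm_eq_abs]
    have hn : (0:ℝ) ≤ ‖p‖ := norm_nonneg p
    have hsq : p.1 ^ 2 ≤ ‖p‖ ^ 2 := by nlinarith [abs_nonneg p.1, sq_abs p.1]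
    have hq1 : α / 2 * p.1 ^ 2 ≤ α / 2 * ‖p‖ ^ 2 := by nlinarith
    have h3' : ‖p‖ * α < 2 * c := by rwa [lt_div_iff₀ hα] at h3
    have hq2 : α / 2 * ‖p‖ ^ 2 ≤ c * ‖p‖ := by
      nlinarith [mul_le_mul_of_nonneg_right h3'.le hn]
    linarith
  have hfd0 : ∀ x : ℝ, fderiv ℝ f (0, x) = 0 := by
    intro x
    rcases eq_or_ne x 0 with rfl | hx
    · exact hFD00.fderiv
    · have heq : f =ᶠ[nhds ((0:ℝ), x)] (fun _ => (0:ℝ)) := hfev x hx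
      rw [heq.fderiv_eq]
      exact fderiv_const_apply 0
  have hdiff : Differentiable ℝ f := by
    intro p
    rcases eq_or_ne p.1 0 with h0 | h0
    · rcases eq_or_ne p.2 0 with h2 | h2
      · have : p = ((0,0) : ℝ × ℝ) := by ext <;> assumption
        rw [this]; exact hFD00.differentiableAt
      · have : p = ((0:ℝ), p.2) := by ext <;> simp [h0]
        rw [this]
        exact (differentiableAt_const (0:ℝ)).congr_of_eventuallyEq (hfev p.2 h2)
    · obtain ⟨L, hL, -, -⟩ := hFDa p.1 p.2 h0
      have : p = (p.1, p.2) := rfl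
      rw [this]
      exact hL.differentiableAt
  set K := 1 + C * (1 + α / 2) with hKdef
  have hK1 : (1:ℝ) ≤ K := by rw [hKdef]; nlinarith [mul_nonneg hCnn (by positivity : (0:ℝ) ≤ 1 + α/2)]
  have hfdb : ∀ p : ℝ × ℝ, ‖fderiv ℝ f p‖ ≤ K * (|p.1| + |p.2|) := by
    intro p
    rcases eq_or_ne p.1 0 with h0 | h0
    · have : fderiv ℝ f p = 0 := by
        have : p = ((0:ℝ), p.2) := by ext <;> simp [h0]
        rw [this]; exact hfd0 p.2
      rw [this]
      simp
      positivity
    · obtain ⟨L, hL, h10, h01⟩ := hFDa p.1 p.2 h0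
      have hfe : fderiv ℝ f p = L := by
        have : p = (p.1, p.2) := rfl
        rw [this]; exact hL.fderiv
      rw [hfe]
      refine le_trans (normL L) ?_
      rw [h10, h01]
      set l := p.1
      set x := p.2
      rcases le_or_gt (|x|) (α / 2 * |l|) with hcase | hcase
      · have hu : |x / l| ≤ α / 2 := by
          rw [abs_div, div_le_iff₀ (abs_pos.mpr h0)]
          linarith
        have hw1 := Lwb (x / l)
        have hdw1 := hCb (x / l) hu
        have e0 : |x * w (x / l)| ≤ |x| := by
          rw [abs_mul]
          nlinarith [abs_nonneg x]
        have e1 : |x ^ 2 / l * dw (x / l)| ≤ |x| * (α / 2) * C := by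
          have hrw : x ^ 2 / l = x * (x / l) := by field_simp
          rw [hrw, abs_mul, abs_mul, mul_assoc]
          have a1 : |x / l| * |dw (x / l)| ≤ α / 2 * C :=
            mul_le_mul hu hdw1 (abs_nonneg _) (by positivity)
          calc |x| * (|x / l| * |dw (x / l)|) ≤ |x| * (α / 2 * C) :=
                mul_le_mul_of_nonneg_left a1 (abs_nonneg x)
            _ = |x| * (α / 2) * C := by ring
        have e2 : |l * w (x / l)| ≤ |l| := by
          rw [abs_mul]
          nlinarith [abs_nonneg l]
        have e3 : |x * dw (x / l)| ≤ |x| * C := by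
          rw [abs_mul]
          nlinarith [abs_nonneg x]
        have t1 : |x * w (x / l) - x ^ 2 / l * dw (x / l)| ≤ |x| + |x| * (α/2) * C := by
          calc |x * w (x / l) - x ^ 2 / l * dw (x / l)|
              ≤ |x * w (x / l)| + |x ^ 2 / l * dw (x / l)| := abs_sub _ _
            _ ≤ |x| + |x| * (α/2) * C := by linarith
        have t2 : |l * w (x / l) + x * dw (x / l)| ≤ |l| + |x| * C := by
          calc |l * w (x / l) + x * dw (x / l)| ≤ |l * w (x/l)| + |x * dw (x/l)| := abs_add_le _ _
            _ ≤ |l| + |x| * C := by linarith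
        have hxnn := abs_nonneg x
        have hlnn := abs_nonneg l
        nlinarith
      · have hu : α / 2 < |x / l| := by
          rw [abs_div, lt_div_iff₀ (abs_pos.mpr h0)]
          linarith
        rw [L1 (x / l) hu.le, L1' (x / l) hu]
        have hxnn := abs_nonneg x
        have hlnn := abs_nonneg l
        simp only [mul_zero, sub_zero, add_zero, abs_zero]
        nlinarith
  -- continuity of fderiv
  have hFdef : ∀ q : ℝ × ℝ, q.1 ≠ 0 →
      fderiv ℝ f q = fderiv ℝ (fun p : ℝ × ℝ => p.2 * (p.1 * w (p.2 * (p.1)⁻¹))) q := by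
    intro q hq
    have hevf : f =ᶠ[nhds q] (fun p : ℝ × ℝ => p.2 * (p.1 * w (p.2 * (p.1)⁻¹))) := by
      filter_upwards [hsopen.mem_nhds hq] with p hp
      rw [show f p = p.2 * ω p.1 p.2 from hf p.1 p.2, hω p.1 hp, div_eq_mul_inv]
    exact hevf.fderiv_eq
  have hFsm : ContDiffOn ℝ ((⊤:ℕ∞) : WithTop ℕ∞)
      (fun p : ℝ × ℝ => p.2 * (p.1 * w (p.2 * (p.1)⁻¹))) {p : ℝ × ℝ | p.1 ≠ 0} := by
    apply ContDiffOn.mul (contDiff_snd.contDiffOn)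
    apply ContDiffOn.mul (contDiff_fst.contDiffOn)
    apply hw.comp_contDiffOn
    exact ContDiffOn.mul (contDiff_snd.contDiffOn) ((contDiff_fst.contDiffOn).inv fun p hp => hp)
  have hcont : Continuous (fderiv ℝ f) := by
    rw [continuous_iff_continuousAt]
    intro p
    rcases eq_or_ne p.1 0 with h0 | h0
    · rcases eq_or_ne p.2 0 with h2 | h2
      · have hp00 : p = ((0,0) : ℝ × ℝ) := by ext <;> assumption
        rw [hp00]
        have ht : Filter.Tendsto (fderiv ℝ f) (nhds ((0,0) : ℝ × ℝ)) (nhds 0) := by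
          apply squeeze_zero_norm hfdb
          have hcb : Continuous (fun p : ℝ × ℝ => K * (|p.1| + |p.2|)) := by
            continuity
          have := hcb.tendsto ((0,0) : ℝ × ℝ)
          simpa using this
        unfold ContinuousAt
        rw [show fderiv ℝ f ((0,0) : ℝ × ℝ) = 0 from hfd0 0]
        exact ht
      · have hmem : p ∈ {q : ℝ × ℝ | α / 2 * |q.1| < |q.2|} := by
          simp only [mem_setOf_eq, h0, abs_zero, mul_zero]
          exact abs_pos.mpr h2
        have hev : ∀ᶠ q in nhds p, fderiv ℝ f q = 0 := by
          filter_upwards [Sopen.mem_nhds hmem] with q hq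
          have : f =ᶠ[nhds q] (fun _ => (0:ℝ)) := by
            filter_upwards [Sopen.mem_nhds hq] with r hr using hfz r hr
          rw [this.fderiv_eq]
          exact fderiv_const_apply 0
        exact (continuousAt_const (y := (0 : ℝ × ℝ →L[ℝ] ℝ))).congr
          (hev.mono fun q h => h.symm)
    · have hcF : ContinuousAt (fderiv ℝ (fun p : ℝ × ℝ => p.2 * (p.1 * w (p.2 * (p.1)⁻¹)))) p :=
        ((hFsm.continuousOn_fderiv_of_isOpen hsopen (by exact_mod_cast le_top)).continuousAt (hsopen.mem_nhds h0))
      apply hcF.congr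
      filter_upwards [hsopen.mem_nhds h0] with q hq
      exact (hFdef q hq).symm
  have part2 : ContDiff ℝ 1 f := contDiff_one_iff_fderiv.mpr ⟨hdiff, hcont⟩
  -- Part (iii)
  have hpart : ∀ l : ℝ, l ≠ 0 → ∀ y : ℝ,
      HasDerivAt (fun l' => f (l', y)) (y * w (y / l) - y ^ 2 / l * dw (y / l)) l := by
    intro l hl y
    have h1 : HasDerivAt (fun l' : ℝ => l'⁻¹) (-(l ^ 2)⁻¹) l := hasDerivAt_inv hl
    have h2 : HasDerivAt (fun l' : ℝ => y * l'⁻¹) (y * -(l ^ 2)⁻¹) l := h1.const_mul y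
    have h3 : HasDerivAt (fun l' : ℝ => w (y * l'⁻¹)) (dw (y * l⁻¹) * (y * -(l ^ 2)⁻¹)) l :=
      ((hwd (y * l⁻¹)).hasDerivAt).comp l h2
    have h4 := (hasDerivAt_id l).mul h3
    have h5 := h4.const_mul y
    have hev : (fun l' => f (l', y)) =ᶠ[nhds l] (fun l' => y * (l' * w (y * l'⁻¹))) := by
      filter_upwards [eventually_ne_nhds hl] with l' hl'
      rw [hf, hω l' hl', div_eq_mul_inv]
    have h6 := h5.congr_of_eventuallyEq hev
    convert h6 using 1
    · rfl
    · rfl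
    simp only [div_eq_mul_inv, id]
    field_simp
    ring
  have hg : ∀ l : ℝ, l ≠ 0 →
      (fun y => deriv (fun l' => f (l', y)) l) = (fun y => y * w (y / l) - y ^ 2 / l * dw (y / l)) := by
    intro l hl
    funext y
    exact (hpart l hl y).deriv
  have hg0 : (fun y => deriv (fun l' => f (l', y)) 0) = (fun _ => (0:ℝ)) := by
    funext y
    rcases eq_or_ne y 0 with rfl | hy
    · have he : (fun l' => f (l', (0:ℝ))) = fun _ => (0:ℝ) := by
        funext l'; rw [hf]; ring
      rw [he, deriv_const]
    · have hev : (fun l' => f (l', y)) =ᶠ[nhds (0:ℝ)] (fun _ => (0:ℝ)) := by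
        have hop : IsOpen {l' : ℝ | α / 2 * |l'| < |y|} :=
          isOpen_lt (continuous_const.mul continuous_abs) continuous_const
        have hmem : (0:ℝ) ∈ {l' : ℝ | α / 2 * |l'| < |y|} := by simp [abs_pos.mpr hy]
        filter_upwards [hop.mem_nhds hmem] with l' hl'
        rw [hf, hωz y l' hl', mul_zero]
      rw [hev.deriv_eq, deriv_const]
  have hGdiff : ∀ l : ℝ, l ≠ 0 →
      Differentiable ℝ (fun y => y * w (y / l) - y ^ 2 / l * dw (y / l)) := by
    intro l hl
    apply Differentiable.sub
    · exact differentiable_fun_id.mul (hwd.comp (differentiable_fun_id.div_const l))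
    · exact ((differentiable_pow 2).div_const l).mul (hdwd.comp (differentiable_fun_id.div_const l))
  have diff3 : ∀ l x : ℝ, DifferentiableAt ℝ (fun y => deriv (fun l' => f (l', y)) l) x := by
    intro l x
    rcases eq_or_ne l 0 with rfl | hl
    · rw [hg0]; exact differentiableAt_const 0
    · rw [hg l hl]; exact (hGdiff l hl) x
  have hval1 : ∀ l : ℝ, l ≠ 0 → deriv (fun y => y * w (y / l) - y ^ 2 / l * dw (y / l)) 0 = 1 := by
    intro l hl
    have hA : HasDerivAt (fun y : ℝ => y / l) (1 / l) 0 := (hasDerivAt_id 0).div_const l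
    have hB := ((hwd ((0:ℝ) / l)).hasDerivAt).comp (0:ℝ) hA
    have hC := (hasDerivAt_id (0:ℝ)).mul hB
    have hE : HasDerivAt (fun y : ℝ => y ^ 2 / l) ((2 * (0:ℝ) ^ 1) / l) 0 :=
      (hasDerivAt_pow 2 (0:ℝ)).div_const l
    have hF' := ((hdwd ((0:ℝ) / l)).hasDerivAt).comp (0:ℝ) hA
    have hD := hE.mul hF'
    have htot := hC.sub hD
    have h7 : HasDerivAt (fun y : ℝ => y * w (y / l) - y ^ 2 / l * dw (y / l)) 1 0 := by
      convert htot using 1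
      · rfl
      · rfl
      · rfl
      · simp [Function.comp, hw0]
    exact h7.deriv
  have val3a : ∀ l : ℝ, l ≠ 0 → deriv (fun y => deriv (fun l' => f (l', y)) l) 0 = 1 := by
    intro l hl
    rw [hg l hl]
    exact hval1 l hl
  have val3b : ∀ x : ℝ, deriv (fun y => deriv (fun l' => f (l', y)) 0) x = 0 := by
    intro x
    rw [hg0]
    exact deriv_const x 0
  have ncont3 : ¬ ContinuousAt
      (fun p : ℝ × ℝ => deriv (fun y => deriv (fun l' => f (l', y)) p.1) p.2) (0, 0) := by
    intro h
    have hseq : Filter.Tendsto (fun n : ℕ => ((1:ℝ)/(n+1), (0:ℝ))) Filter.atTop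
        (nhds ((0:ℝ),(0:ℝ))) := by
      refine Filter.Tendsto.prodMk_nhds ?_ tendsto_const_nhds
      exact tendsto_one_div_add_atTop_nhds_zero_nat
    have h2 : Filter.Tendsto
        (fun n : ℕ => deriv (fun y => deriv (fun l' => f (l', y)) ((1:ℝ)/(n+1))) 0)
        Filter.atTop (nhds (deriv (fun y => deriv (fun l' => f (l', y)) 0) 0)) :=
      h.tendsto.comp hseq
    rw [val3b 0] at h2
    have h2' : Filter.Tendsto (fun _ : ℕ => (1:ℝ)) Filter.atTop (nhds 0) :=
      h2.congr fun n => val3a _ (by positivity)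
    have := tendsto_nhds_unique h2' tendsto_const_nhds
    norm_num at this
  exact ⟨⟨diff_i, di0, dix, ncont_i⟩, part2, ⟨diff3, val3a, val3b, ncont3⟩⟩
end

section
/- Let A be a connected subset of a metric space M, let 𝒢 be a collection of open subsets of M covering A, and let x, y ∈ A. Then there exist finitely many members G₁, …, Gₙ of 𝒢 such that x ∈ G₁, y ∈ Gₙ, and for all 1 ≤ i, j ≤ n, Gᵢ ∩ Gⱼ ≠ ∅ if and only if |i − j| ≤ 1. -/
/-! Among all chains of members of `𝒢` leading from `x` to `y` in which consecutive links
meet, take one of minimal length `n`. If two links `Gᵢ`, `Gⱼ` with `i + 1 < j` met, the links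
strictly between them could be dropped, giving a shorter chain; so only neighbouring links meet.
Such chains exist because the points of `A` reachable from `x` by a chain form a set which
contains every member of `𝒢` it meets, and a connected set cannot be split by the open cover. -/

open Set

theorem IsPreconnected.subset_of_forall_inter_nonempty_subset {X : Type*} [TopologicalSpace X]
    {s R : Set X} (hs : IsPreconnected s) (𝒢 : Set (Set X)) (hopen : ∀ G ∈ 𝒢, IsOpen G)
    (hcover : s ⊆ ⋃₀ 𝒢) (hR : ∀ G ∈ 𝒢, (G ∩ R).Nonempty → G ⊆ R) (hsR : (s ∩ R).Nonempty) :
    s ⊆ R := by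
  set U := ⋃₀ {G ∈ 𝒢 | (G ∩ R).Nonempty}
  set V := ⋃₀ {G ∈ 𝒢 | ¬(G ∩ R).Nonempty}
  have hUR : U ⊆ R := sUnion_subset fun G hG => hR G hG.1 hG.2
  have hUV : Disjoint U V :=
    disjoint_left.2 fun z hzU ⟨G, ⟨_, hGR⟩, hzG⟩ => hGR ⟨z, hzG, hUR hzU⟩
  have hsUV : s ⊆ U ∪ V := fun z hz => by
    obtain ⟨G, hG, hzG⟩ := hcover hz
    by_cases hGR : (G ∩ R).Nonempty
    · exact Or.inl ⟨G, ⟨hG, hGR⟩, hzG⟩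
    · exact Or.inr ⟨G, ⟨hG, hGR⟩, hzG⟩
  have hsU : (s ∩ U).Nonempty := by
    obtain ⟨z, hzs, hzR⟩ := hsR
    obtain ⟨G, hG, hzG⟩ := hcover hzs
    exact ⟨z, hzs, G, ⟨hG, z, hzG, hzR⟩, hzG⟩
  exact (hs.subset_left_of_subset_union (isOpen_sUnion fun G hG => hopen G hG.1)
    (isOpen_sUnion fun G hG => hopen G hG.1) hUV hsUV hsU).trans hUR

structure IsLinkedChain {α : Type*} (𝒢 : Set (Set α)) (x y : α) (n : ℕ) (c : ℕ → Set α) :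
    Prop where
  one_le : 1 ≤ n
  mem : ∀ i, 1 ≤ i → i ≤ n → c i ∈ 𝒢
  mem_first : x ∈ c 1
  mem_last : y ∈ c n
  link : ∀ i, 1 ≤ i → i < n → (c i ∩ c (i + 1)).Nonempty

namespace IsLinkedChain

variable {α : Type*} {𝒢 : Set (Set α)} {x y z : α} {n : ℕ} {c : ℕ → Set α}

theorem single {G : Set α} (hG : G ∈ 𝒢) (hx : x ∈ G) (hy : y ∈ G) :
    IsLinkedChain 𝒢 x y 1 fun _ => G :=
  ⟨le_rfl, fun _ _ _ => hG, hx, hy, fun _ h₁ h₂ => absurd h₂ (not_lt.2 h₁)⟩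

theorem snoc (h : IsLinkedChain 𝒢 x y n c) {G : Set α} (hG : G ∈ 𝒢) (hy : y ∈ G)
    (hz : z ∈ G) : IsLinkedChain 𝒢 x z (n + 1) (Function.update c (n + 1) G) where
  one_le := by omega
  mem i hi hin := by
    rcases eq_or_ne i (n + 1) with rfl | hne
    · simpa using hG
    · rw [Function.update_of_ne hne]
      exact h.mem i hi (by omega)
  mem_first := by
    rw [Function.update_of_ne (show 1 ≠ n + 1 by have := h.one_le; omega)]
    exact h.mem_first
  mem_last := by simpa using hz
  link i hi hin := by
    rw [Function.update_of_ne (by omega)]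
    rcases eq_or_ne (i + 1) (n + 1) with hi' | hne
    · rw [hi', Function.update_self, show i = n by omega]
      exact ⟨y, h.mem_last, hy⟩
    · rw [Function.update_of_ne hne]
      exact h.link i hi (by omega)

theorem nonempty (h : IsLinkedChain 𝒢 x y n c) {i : ℕ} (hi : 1 ≤ i) (hin : i ≤ n) :
    (c i).Nonempty := by
  rcases hin.lt_or_eq with hin | rfl
  · exact (h.link i hi hin).mono inter_subset_left
  · exact ⟨y, h.mem_last⟩

/-- The chain `c 1, …, c i, c j, …, c n`, obtained by dropping the `j - i - 1` links strictly
between `c i` and `c j`. -/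
theorem shortcut (h : IsLinkedChain 𝒢 x y n c) {i j : ℕ} (hi : 1 ≤ i) (hij : i + 1 < j)
    (hjn : j ≤ n) (hcij : (c i ∩ c j).Nonempty) :
    IsLinkedChain 𝒢 x y (n - (j - i - 1)) fun k => if k ≤ i then c k else c (k + (j - i - 1))
    where
  one_le := by omega
  mem k hk hkn := by
    split_ifs
    · exact h.mem k hk (by omega)
    · exact h.mem _ (by omega) (by omega)
  mem_first := by simpa [hi] using h.mem_first
  mem_last := by
    rw [if_neg (by omega), show n - (j - i - 1) + (j - i - 1) = n by omega]
    exact h.mem_last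
  link k hk hkn := by
    rcases lt_trichotomy k i with hki | rfl | hki
    · rw [if_pos hki.le, if_pos (by omega)]
      exact h.link k hk (by omega)
    · rw [if_pos le_rfl, if_neg (by omega), show k + 1 + (j - k - 1) = j by omega]
      exact hcij
    · rw [if_neg (by omega), if_neg (by omega), show k + 1 + (j - i - 1) = k + (j - i - 1) + 1
        by omega]
      exact h.link _ (by omega) (by omega)

theorem inter_nonempty_iff_of_minimal (h : IsLinkedChain 𝒢 x y n c)
    (hmin : ∀ m c', IsLinkedChain 𝒢 x y m c' → n ≤ m) {i j : ℕ} (hi : 1 ≤ i) (hin : i ≤ n)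
    (hj : 1 ≤ j) (hjn : j ≤ n) : (c i ∩ c j).Nonempty ↔ |(i : ℤ) - (j : ℤ)| ≤ 1 := by
  have no_shortcut : ∀ i j, 1 ≤ i → i + 1 < j → j ≤ n → ¬(c i ∩ c j).Nonempty :=
    fun i j hi hij hjn hcij => by
      have := hmin _ _ (h.shortcut hi hij hjn hcij)
      omega
  rw [abs_le]
  constructor
  · intro hcij
    by_contra hfar
    rcases (by omega : i + 1 < j ∨ j + 1 < i) with hij | hji
    · exact no_shortcut i j hi hij hjn hcij
    · exact no_shortcut j i hj hji hin (inter_comm (c i) (c j) ▸ hcij)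
  · intro hclose
    rcases (by omega : i = j ∨ j = i + 1 ∨ i = j + 1) with rfl | rfl | rfl
    · simpa using h.nonempty hi hin
    · exact h.link i hi (by omega)
    · exact inter_comm (c j) (c (j + 1)) ▸ h.link j hj (by omega)

end IsLinkedChain

theorem IsPreconnected.exists_isLinkedChain {X : Type*} [TopologicalSpace X] {A : Set X}
    (hA : IsPreconnected A) (𝒢 : Set (Set X)) (hopen : ∀ G ∈ 𝒢, IsOpen G)
    (hcover : A ⊆ ⋃₀ 𝒢) {x y : X} (hx : x ∈ A) (hy : y ∈ A) :
    ∃ n c, IsLinkedChain 𝒢 x y n c := by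
  set R := {z | ∃ n c, IsLinkedChain 𝒢 x z n c}
  have hR : ∀ G ∈ 𝒢, (G ∩ R).Nonempty → G ⊆ R := by
    rintro G hG ⟨w, hwG, n, c, hc⟩ z hzG
    exact ⟨n + 1, _, hc.snoc hG hwG hzG⟩
  have hxR : x ∈ R := by
    obtain ⟨G, hG, hxG⟩ := hcover hx
    exact ⟨1, _, IsLinkedChain.single hG hxG hxG⟩
  exact hA.subset_of_forall_inter_nonempty_subset 𝒢 hopen hcover hR ⟨x, hx, hxR⟩ hy

/-- chains in open covers of connected sets: if 𝒢 is an open cover of a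
connected set A in a metric space and x, y ∈ A, then there are finitely many members
G₁, …, Gₙ of 𝒢 with x ∈ G₁, y ∈ Gₙ and Gᵢ ∩ Gⱼ ≠ ∅ if and only if |i − j| ≤ 1. -/
theorem stmt17 {M : Type*} [MetricSpace M] {A : Set M} (hA : IsConnected A)
    (𝒢 : Set (Set M)) (hopen : ∀ G ∈ 𝒢, IsOpen G) (hcover : A ⊆ ⋃₀ 𝒢)
    {x y : M} (hx : x ∈ A) (hy : y ∈ A) :
    ∃ (n : ℕ) (c : ℕ → Set M), 1 ≤ n ∧
      (∀ i : ℕ, 1 ≤ i → i ≤ n → c i ∈ 𝒢) ∧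
      x ∈ c 1 ∧ y ∈ c n ∧
      (∀ i j : ℕ, 1 ≤ i → i ≤ n → 1 ≤ j → j ≤ n →
        ((c i ∩ c j).Nonempty ↔ |(i : ℤ) - (j : ℤ)| ≤ 1)) := by
  classical
  have hchain : ∃ n c, IsLinkedChain 𝒢 x y n c :=
    hA.isPreconnected.exists_isLinkedChain 𝒢 hopen hcover hx hy
  obtain ⟨c, hc⟩ := Nat.find_spec hchain
  have hmin : ∀ m c', IsLinkedChain 𝒢 x y m c' → Nat.find hchain ≤ m :=
    fun m c' hc' => Nat.find_min' hchain ⟨c', hc'⟩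
  exact ⟨_, c, hc.one_le, hc.mem, hc.mem_first, hc.mem_last,
    fun i j hi hin hj hjn => hc.inter_nonempty_iff_of_minimal hmin hi hin hj hjn⟩
end

section
/- Let A be a connected subset of a metric space M and let x, y ∈ A with x ≠ y. Then for all sufficiently small ε > 0 there exist an integer n and points x₁, …, xₙ ∈ A with x₁ = x, xₙ = y, and such that for all 1 ≤ i, j ≤ n the open balls of radius ε satisfy B_ε(xᵢ) ∩ B_ε(xⱼ) ≠ ∅ if and only if |i − j| ≤ 1 (equivalently, d(xᵢ, xⱼ) < 2ε if and only if |i − j| ≤ 1). -/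
/-!
For a fixed `ε > 0`, the points of a preconnected space reachable from `x` by steps of length
`< ε` form a clopen set, so every point is reachable; in particular `x` and `y` are joined inside
`A` by a chain whose consecutive `ε`-balls meet. A shortest such chain has no shortcut: if the
balls around two non-consecutive points met, the points between them could be dropped. Hence in a
shortest chain two balls meet exactly when the indices differ by at most one.
-/

open Set Relation

namespace Relation

variable {α : Type*} {r : α → α → Prop}

def IsIndexedChain (r : α → α → Prop) (p : ℕ → α) (n : ℕ) : Prop :=
  ∀ i, 1 ≤ i → i < n → r (p i) (p (i + 1))

theorem exists_isIndexedChain_of_reflTransGen {a b : α} (h : ReflTransGen r a b) :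
    ∃ (n : ℕ) (p : ℕ → α), 1 ≤ n ∧ p 1 = a ∧ p n = b ∧ IsIndexedChain r p n := by
  induction h with
  | refl => exact ⟨1, fun _ => a, le_rfl, rfl, rfl, fun i _ _ => by omega⟩
  | @tail b c _ hbc ih =>
    obtain ⟨n, p, hn, hp1, hpn, hp⟩ := ih
    refine ⟨n + 1, fun k => if k ≤ n then p k else c, by omega, by simp [hn, hp1], by simp, ?_⟩
    intro i hi hin
    rcases Nat.lt_or_ge i n with hi' | hi'
    · simpa [hi'.le, Nat.succ_le_of_lt hi'] using hp i hi hi'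
    · obtain rfl : i = n := by omega
      simpa [hpn] using hbc

theorem IsIndexedChain.shortcut {p : ℕ → α} {m d i : ℕ} (hp : IsIndexedChain r p (m + d))
    (him : i < m) (hr : r (p i) (p (i + d + 1))) :
    IsIndexedChain r (fun k => if k ≤ i then p k else p (k + d)) m := by
  intro k hk hkm
  rcases lt_trichotomy k i with hki | rfl | hki
  · simpa [hki.le, Nat.succ_le_of_lt hki] using hp k hk (by omega)
  · simpa [Nat.add_right_comm] using hr
  · have := hp (k + d) (by omega) (by omega)
    simpa [hki.not_ge, (hki.trans (Nat.lt_succ_self k)).not_ge, Nat.add_right_comm] using this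

/-- A shortest chain of a reflexive symmetric relation is an induced path. -/
theorem exists_induced_chain_of_reflTransGen (hrefl : ∀ a, r a a) (hsymm : ∀ a b, r a b → r b a)
    {a b : α} (h : ReflTransGen r a b) :
    ∃ (n : ℕ) (p : ℕ → α), 1 ≤ n ∧ p 1 = a ∧ p n = b ∧ ∀ i j, 1 ≤ i → i ≤ n → 1 ≤ j → j ≤ n →
      (r (p i) (p j) ↔ |(i : ℤ) - j| ≤ 1) := by
  classical
  have hex : ∃ n, 1 ≤ n ∧ ∃ p, p 1 = a ∧ p n = b ∧ IsIndexedChain r p n := by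
    obtain ⟨n, p, hn, hp⟩ := exists_isIndexedChain_of_reflTransGen h
    exact ⟨n, hn, p, hp⟩
  obtain ⟨hn, p, hp1, hpn, hp⟩ := Nat.find_spec hex
  set n := Nat.find hex
  have hfar : ∀ i j, 1 ≤ i → i + 2 ≤ j → j ≤ n → ¬ r (p i) (p j) := by
    intro i j hi hij hjn hr
    obtain ⟨d, m, hd, rfl, hnm⟩ : ∃ d m, 1 ≤ d ∧ j = i + d + 1 ∧ n = m + d :=
      ⟨j - i - 1, n - (j - i - 1), by omega, by omega, by omega⟩
    rw [hnm] at hp hpn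
    refine Nat.find_min hex (m := m) (by omega) ⟨by omega, _, ?_, ?_, hp.shortcut (by omega) hr⟩
    · simp [hi, hp1]
    · simp [show ¬ m ≤ i by omega, hpn]
  refine ⟨n, p, hn, hp1, hpn, fun i j hi hin hj hjn => ⟨fun hr => ?_, fun hij => ?_⟩⟩
  · by_contra hij
    rw [abs_le] at hij
    rcases (by omega : i + 2 ≤ j ∨ j + 2 ≤ i) with h | h
    · exact hfar i j hi h hjn hr
    · exact hfar j i hj h hin (hsymm _ _ hr)
  · rw [abs_le] at hij
    rcases (by omega : i = j ∨ j = i + 1 ∨ i = j + 1) with rfl | rfl | rfl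
    · exact hrefl _
    · exact hp i hi hjn
    · exact hsymm _ _ (hp j hj hin)

end Relation

theorem PreconnectedSpace.reflTransGen_dist_lt {X : Type*} [PseudoMetricSpace X]
    [PreconnectedSpace X] {ε : ℝ} (hε : 0 < ε) (x y : X) :
    ReflTransGen (fun u v : X => dist u v < ε) x y := by
  refine PreconnectedSpace.induction₂' _ (fun z => ?_) ⟨fun _ _ _ => ReflTransGen.trans⟩ x y
  filter_upwards [Metric.ball_mem_nhds z hε] with w hw
  exact ⟨.single (by rwa [dist_comm]), .single hw⟩

theorem stmt18_general {M : Type*} [MetricSpace M] {A : Set M} (hA : IsConnected A)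
    {x y : M} (hx : x ∈ A) (hy : y ∈ A) :
    ∃ ε₀ > (0 : ℝ), ∀ ε : ℝ, 0 < ε → ε ≤ ε₀ →
      ∃ (n : ℕ) (p : ℕ → M), 1 ≤ n ∧
        (∀ i : ℕ, 1 ≤ i → i ≤ n → p i ∈ A) ∧
        p 1 = x ∧ p n = y ∧
        (∀ i j : ℕ, 1 ≤ i → i ≤ n → 1 ≤ j → j ≤ n →
          ((Metric.ball (p i) ε ∩ Metric.ball (p j) ε).Nonempty ↔
            |(i : ℤ) - (j : ℤ)| ≤ 1)) := by
  refine ⟨1, one_pos, fun ε hε _ => ?_⟩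
  have : PreconnectedSpace A := Subtype.preconnectedSpace hA.isPreconnected
  let r : A → A → Prop := fun u v => (Metric.ball (u : M) ε ∩ Metric.ball (v : M) ε).Nonempty
  have hchain : ReflTransGen r ⟨x, hx⟩ ⟨y, hy⟩ :=
    ReflTransGen.mono (fun u v huv => ⟨v, Metric.mem_ball'.2 huv, Metric.mem_ball_self hε⟩) _ _
      (PreconnectedSpace.reflTransGen_dist_lt hε _ _)
  obtain ⟨n, q, hn, hq1, hqn, hq⟩ := exists_induced_chain_of_reflTransGen
    (r := r) (fun u => ⟨u, Metric.mem_ball_self hε, Metric.mem_ball_self hε⟩)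
    (fun u v huv => by simpa only [r, inter_comm] using huv) hchain
  exact ⟨n, fun i => q i, hn, fun i _ _ => (q i).2, by simp [hq1], by simp [hqn], hq⟩

/-- if A is connected in a metric space and x ≠ y are points of A, then for
all sufficiently small ε > 0 there are points x₁ = x, x₂, …, xₙ = y in A such that the open
ε-balls around them satisfy B_ε(xᵢ) ∩ B_ε(xⱼ) ≠ ∅ if and only if |i − j| ≤ 1. -/
theorem stmt18 {M : Type*} [MetricSpace M] {A : Set M} (hA : IsConnected A)
    {x y : M} (hx : x ∈ A) (hy : y ∈ A) (hxy : x ≠ y) :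
    ∃ ε₀ > (0 : ℝ), ∀ ε : ℝ, 0 < ε → ε ≤ ε₀ →
      ∃ (n : ℕ) (p : ℕ → M), 1 ≤ n ∧
        (∀ i : ℕ, 1 ≤ i → i ≤ n → p i ∈ A) ∧
        p 1 = x ∧ p n = y ∧
        (∀ i j : ℕ, 1 ≤ i → i ≤ n → 1 ≤ j → j ≤ n →
          ((Metric.ball (p i) ε ∩ Metric.ball (p j) ε).Nonempty ↔
            |(i : ℤ) - (j : ℤ)| ≤ 1)) :=
  stmt18_general hA hx hy
end

section
/- Let X be a real normed vector space, ε > 0, and let x₁, …, xₙ ∈ X be points such that for all 1 ≤ i, j ≤ n, ‖xᵢ − xⱼ‖ < 2ε if and only if |i − j| ≤ 1. For 1 ≤ i ≤ n−1 let Lᵢ = {t xᵢ + (1−t) xᵢ₊₁ : t ∈ [0,1]} be the straight line segment joining xᵢ to xᵢ₊₁. Then Lᵢ ∩ Lᵢ₊₁ = {xᵢ₊₁} for all 1 ≤ i ≤ n−2, and Lᵢ ∩ Lⱼ = ∅ whenever 1 ≤ i and i + 1 < j ≤ n−1; consequently the union ⋃_{i=1}^{n−1} Lᵢ is a continuous,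 piecewise-linear, non-self-intersecting curve joining x₁ to xₙ. -/
open Set

/-! Consecutive points are `2ε`-close and points two or more steps apart are `2ε`-far.
If `[x, y]` and `[y, z]` share a point `w ≠ y`, then `x - y` and `z - y` lie on a common ray
through `w - y`, so `‖x - z‖ = |‖x - y‖ - ‖z - y‖| < 2ε`, which is impossible. A point common to
`[xᵢ, xᵢ₊₁]` and `[xⱼ, xⱼ₊₁]` with `j ≥ i + 2` would give, by the triangle inequality,
`4ε ≤ ‖xᵢ - xⱼ‖ + ‖xᵢ₊₁ - xⱼ₊₁‖ ≤ ‖xᵢ - xᵢ₊₁‖ + ‖xⱼ - xⱼ₊₁‖ < 4ε`. The union is path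
connected since consecutive segments share an endpoint. -/

theorem sameRay_sub_of_mem_segment_of_mem_segment {𝕜 E : Type*} [Field 𝕜] [LinearOrder 𝕜]
    [IsStrictOrderedRing 𝕜] [AddCommGroup E] [Module 𝕜 E] {x y z w : E}
    (hxy : w ∈ segment 𝕜 x y) (hyz : w ∈ segment 𝕜 y z) (hw : w ≠ y) :
    SameRay 𝕜 (x - y) (z - y) := by
  have ray_of_mem {v : E} (hv : w ∈ segment 𝕜 y v) : SameRay 𝕜 (w - y) (v - y) := by
    rw [← sub_add_sub_cancel v w y, add_comm]
    exact (SameRay.refl _).add_right (mem_segment_iff_sameRay.1 hv)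
  exact (ray_of_mem (segment_symm 𝕜 x y ▸ hxy)).symm.trans (ray_of_mem hyz)
    fun h => absurd (sub_eq_zero.1 h) hw

theorem segment_inter_segment_eq_singleton_of_max_lt {E : Type*} [NormedAddCommGroup E]
    [NormedSpace ℝ E] {x y z : E} (h : max ‖x - y‖ ‖z - y‖ < ‖x - z‖) :
    segment ℝ x y ∩ segment ℝ y z = {y} := by
  refine Subset.antisymm (fun w ⟨hxy, hyz⟩ => by_contra fun hw => ?_)
    (singleton_subset_iff.2 ⟨right_mem_segment ℝ x y, left_mem_segment ℝ y z⟩)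
  have hray := sameRay_sub_of_mem_segment_of_mem_segment hxy hyz hw
  have hxz : ‖x - z‖ = |‖x - y‖ - ‖z - y‖| := by
    rw [← hray.norm_sub, sub_sub_sub_cancel_right]
  rw [hxz, max_lt_iff] at h
  cases abs_cases (‖x - y‖ - ‖z - y‖) <;> linarith [norm_nonneg (x - y), norm_nonneg (z - y)]

theorem segment_inter_segment_eq_empty_of_dist_lt {E : Type*} [NormedAddCommGroup E]
    [NormedSpace ℝ E] {x y z w : E} (h : dist x y + dist z w < dist x z + dist y w) :
    segment ℝ x y ∩ segment ℝ z w = ∅ := by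
  refine eq_empty_iff_forall_notMem.2 fun v ⟨hxy, hzw⟩ => ?_
  have hx := dist_add_dist_of_mem_segment hxy
  have hz := dist_add_dist_of_mem_segment hzw
  have hxz := dist_triangle x v z
  have hyw := dist_triangle y v w
  linarith [dist_comm v z, dist_comm y v]

theorem isPathConnected_biUnion_segment_Ico {E : Type*} [AddCommGroup E] [Module ℝ E]
    [TopologicalSpace E] [ContinuousAdd E] [ContinuousSMul ℝ E] (p : ℕ → E) {m n : ℕ}
    (hmn : m < n) : IsPathConnected (⋃ i ∈ Finset.Ico m n, segment ℝ (p i) (p (i + 1))) := by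
  have isPathConnected_segment (i : ℕ) : IsPathConnected (segment ℝ (p i) (p (i + 1))) :=
    (convex_segment _ _).isPathConnected ⟨_, left_mem_segment ℝ _ _⟩
  induction n, hmn using Nat.le_induction with
  | base => simpa using isPathConnected_segment m
  | succ n hmn ih =>
    rw [Nat.Ico_succ_right_eq_insert_Ico (by omega), Finset.set_biUnion_insert]
    obtain ⟨k, rfl⟩ : ∃ k, n = k + 1 := ⟨n - 1, by omega⟩
    refine (isPathConnected_segment _).union ih ⟨p (k + 1), left_mem_segment ℝ _ _, ?_⟩
    exact mem_iUnion₂.2 ⟨k, Finset.mem_Ico.2 ⟨by omega, by omega⟩, right_mem_segment ℝ _ _⟩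

theorem stmt19_general {X : Type*} [NormedAddCommGroup X] [NormedSpace ℝ X]
    (ε : ℝ) (n : ℕ) (p : ℕ → X)
    (h : ∀ i j : ℕ, 1 ≤ i → i ≤ n → 1 ≤ j → j ≤ n →
      (‖p i - p j‖ < 2 * ε ↔ |(i : ℤ) - (j : ℤ)| ≤ 1)) :
    (∀ i : ℕ, 1 ≤ i → i + 2 ≤ n →
      segment ℝ (p i) (p (i + 1)) ∩ segment ℝ (p (i + 1)) (p (i + 2)) = {p (i + 1)}) ∧
    (∀ i j : ℕ, 1 ≤ i → i + 1 < j → j + 1 ≤ n →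
      segment ℝ (p i) (p (i + 1)) ∩ segment ℝ (p j) (p (j + 1)) = ∅) ∧
    (2 ≤ n →
      p 1 ∈ (⋃ i ∈ Finset.Ico 1 n, segment ℝ (p i) (p (i + 1))) ∧
      p n ∈ (⋃ i ∈ Finset.Ico 1 n, segment ℝ (p i) (p (i + 1))) ∧
      IsPathConnected (⋃ i ∈ Finset.Ico 1 n, segment ℝ (p i) (p (i + 1)))) := by
  have near {i : ℕ} (hi : 1 ≤ i) (hin : i + 1 ≤ n) : dist (p i) (p (i + 1)) < 2 * ε := by
    rw [dist_eq_norm, h i (i + 1) hi (by omega) (by omega) hin, abs_le]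
    omega
  have far {i j : ℕ} (hi : 1 ≤ i) (hj : j ≤ n) (hij : i + 2 ≤ j) : 2 * ε ≤ dist (p i) (p j) := by
    rw [dist_eq_norm, ← not_lt, h i j hi (by omega) (by omega) hj, abs_le]
    omega
  refine ⟨fun i hi hin => ?_, fun i j hi hij hjn => ?_, fun hn => ⟨?_, ?_, ?_⟩⟩
  · apply segment_inter_segment_eq_singleton_of_max_lt
    simp only [← dist_eq_norm, max_lt_iff, dist_comm (p (i + 2))]
    exact ⟨(near hi (by omega)).trans_le (far hi hin le_rfl),
      (near (by omega) hin).trans_le (far hi hin le_rfl)⟩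
  · apply segment_inter_segment_eq_empty_of_dist_lt
    linarith [near hi (by omega), near (by omega) hjn,
      far hi (by omega) hij, far (by omega) hjn (by omega : i + 1 + 2 ≤ j + 1)]
  · exact mem_iUnion₂.2 ⟨1, Finset.mem_Ico.2 ⟨le_rfl, hn⟩, left_mem_segment ℝ _ _⟩
  · obtain ⟨k, rfl⟩ : ∃ k, n = k + 1 := ⟨n - 1, by omega⟩
    exact mem_iUnion₂.2 ⟨k, Finset.mem_Ico.2 ⟨by omega, by omega⟩, right_mem_segment ℝ _ _⟩
  · exact isPathConnected_biUnion_segment_Ico p hn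

/-- in a real normed space, if x₁, …, xₙ satisfy ‖xᵢ − xⱼ‖ < 2ε iff
|i − j| ≤ 1, and Lᵢ is the segment joining xᵢ to xᵢ₊₁ (1 ≤ i ≤ n−1), then consecutive
segments meet exactly in their common endpoint, non-consecutive segments are disjoint, and
consequently the union of the segments is a (path-connected) continuous piecewise-linear
non-self-intersecting curve joining x₁ to xₙ. -/
theorem stmt19 {X : Type*} [NormedAddCommGroup X] [NormedSpace ℝ X]
    (ε : ℝ) (hε : 0 < ε) (n : ℕ) (p : ℕ → X)
    (h : ∀ i j : ℕ, 1 ≤ i → i ≤ n → 1 ≤ j → j ≤ n →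
      (‖p i - p j‖ < 2 * ε ↔ |(i : ℤ) - (j : ℤ)| ≤ 1)) :
    (∀ i : ℕ, 1 ≤ i → i + 2 ≤ n →
      segment ℝ (p i) (p (i + 1)) ∩ segment ℝ (p (i + 1)) (p (i + 2)) = {p (i + 1)}) ∧
    (∀ i j : ℕ, 1 ≤ i → i + 1 < j → j + 1 ≤ n →
      segment ℝ (p i) (p (i + 1)) ∩ segment ℝ (p j) (p (j + 1)) = ∅) ∧
    (2 ≤ n →
      p 1 ∈ (⋃ i ∈ Finset.Ico 1 n, segment ℝ (p i) (p (i + 1))) ∧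
      p n ∈ (⋃ i ∈ Finset.Ico 1 n, segment ℝ (p i) (p (i + 1))) ∧
      IsPathConnected (⋃ i ∈ Finset.Ico 1 n, segment ℝ (p i) (p (i + 1)))) :=
  stmt19_general ε n p h
end
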